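/- arXiv:0904.0538 — 4 statements merged into one kernel-verified Lean document; each statement's English description precedes it below -/
import Mathlib

section
/- Let 0 < α ≤ β ≤ 1 and let {X_{k,l}, k,l ≥ 0} be i.i.d. real random variables with X a generic copy. Suppose n P(|X| > n) → 0 as n → ∞, and suppose in addition that μ_{m,n} / (A_m^α A_n^β) → 0 as m, n → ∞, where μ_{m,n} = Σ_{k=0}^m Σ_{l=0}^n A_{m-k}^{α-1} A_{n-l}^{β-1} E(X 1{|X| ≤ A_m^α A_n^β}). Then (1/(A_m^α A_n^β)) Σ_{k=0}^m Σ_{l=0}^n A_{m-k}^{α-1} A_{n-l}^{β-1} X_{k,l} → 0 in probability as m, n → ∞ (i.e., as min(m,n) → ∞). -/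
open MeasureTheory ProbabilityTheory Filter Finset Topology

/-- `cesaroA α n` is the Cesàro coefficient `A_n^α = (α+1)(α+2)⋯(α+n)/n!`
(with `A_0^α = 1`). Note that this also gives `A_n^{-1} = 0` for `n ≥ 1`. -/
noncomputable def cesaroA (α : ℝ) (n : ℕ) : ℝ :=
  ∏ j ∈ Finset.range n, (α + (j + 1)) / (j + 1)

/-!
Write `a = A_m^α A_n^β` and `w_{kl} = A_{m-k}^{α-1} A_{n-l}^{β-1} ∈ (0, 1]`, so that
`∑ w_{kl} = a`, and truncate `X_{kl}` at its own level `a / w_{kl} ≥ a`. Since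
`t P(|X| > t) → 0`, the truncation changes the sum with probability at most
`∑ o(w_{kl} / a) = o(1)`, and `E[X² 1{|X| ≤ t}] = o(t)`, so the truncated sum has variance
`∑ w_{kl}² o(a / w_{kl}) = o(a²)` and Chebyshev's inequality applies once its mean is `o(a)`.
That holds because the truncated mean `c(t) = E[X 1{|X| ≤ t}]` tends to `0` as `t → ∞`: the
hypothesis on `μ_{m,n} = a c(a)` gives this along the diagonal levels `t = A_n^α A_n^β`, which
grow by a bounded factor, and between such levels `s ≤ t` one has `|c(t) - c(s)| ≤ t P(|X| > s)`.
-/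

theorem cesaroA_succ (α : ℝ) (n : ℕ) :
    cesaroA α (n + 1) = cesaroA α n * ((α + (n + 1)) / (n + 1)) :=
  prod_range_succ _ n

theorem cesaroA_pos {α : ℝ} (hα : -1 < α) (n : ℕ) : 0 < cesaroA α n :=
  prod_pos fun j _ => div_pos (by linarith [(j.cast_nonneg : (0 : ℝ) ≤ j)]) (by positivity)

theorem cesaroA_le_one {α : ℝ} (hα : -1 < α) (hα0 : α ≤ 0) (n : ℕ) : cesaroA α n ≤ 1 :=
  prod_le_one (fun j _ => (div_pos (by linarith [(j.cast_nonneg : (0 : ℝ) ≤ j)])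
    (by positivity)).le) fun j _ => (div_le_one (by positivity)).2 (by linarith)

theorem one_le_cesaroA {α : ℝ} (hα : 0 ≤ α) (n : ℕ) : 1 ≤ cesaroA α n :=
  one_le_prod fun j _ => (one_le_div (by positivity)).2 (by linarith)

theorem cesaroA_mono {α : ℝ} (hα : 0 ≤ α) : Monotone (cesaroA α) :=
  monotone_nat_of_le_succ fun n => by
    rw [cesaroA_succ]
    exact le_mul_of_one_le_right (cesaroA_pos (by linarith) n).le
      ((one_le_div (by positivity)).2 (by linarith))

theorem cesaroA_succ_le {α : ℝ} (hα : 0 ≤ α) (n : ℕ) :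
    cesaroA α (n + 1) ≤ (1 + α) * cesaroA α n := by
  rw [cesaroA_succ, mul_comm (1 + α)]
  refine mul_le_mul_of_nonneg_left ?_ (cesaroA_pos (by linarith) n).le
  rw [div_le_iff₀ (by positivity)]
  nlinarith [(n.cast_nonneg : (0 : ℝ) ≤ n)]

theorem cesaroA_sub_one_succ_mul (α : ℝ) (n : ℕ) :
    cesaroA (α - 1) (n + 1) * (n + 1) = α * cesaroA α n := by
  induction n with
  | zero => simp [cesaroA]
  | succ n ih =>
    rw [cesaroA_succ (α - 1) (n + 1), cesaroA_succ α n]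
    push_cast
    field_simp
    linear_combination (α + n + 1) * ih

theorem sum_range_cesaroA_sub_one (α : ℝ) (n : ℕ) :
    ∑ i ∈ range (n + 1), cesaroA (α - 1) i = cesaroA α n := by
  induction n with
  | zero => simp [cesaroA]
  | succ n ih =>
    rw [sum_range_succ, ih, cesaroA_succ α n]
    field_simp
    linear_combination cesaroA_sub_one_succ_mul α n

theorem sum_sum_cesaroA_sub_one_mul (α β : ℝ) (m n : ℕ) :
    ∑ k ∈ range (m + 1), ∑ l ∈ range (n + 1),
      cesaroA (α - 1) (m - k) * cesaroA (β - 1) (n - l) = cesaroA α m * cesaroA β n := by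
  have hreflect (γ : ℝ) (k : ℕ) :
      ∑ i ∈ range (k + 1), cesaroA γ (k - i) = ∑ i ∈ range (k + 1), cesaroA γ i := by
    simpa using sum_range_reflect (cesaroA γ) (k + 1)
  rw [← sum_mul_sum, hreflect, hreflect, sum_range_cesaroA_sub_one, sum_range_cesaroA_sub_one]

theorem tendsto_cesaroA_atTop {α : ℝ} (hα : 0 < α) : Tendsto (cesaroA α) atTop atTop := by
  have hharmonic (n : ℕ) : α * ∑ j ∈ range n, (1 : ℝ) / (j + 1) ≤ cesaroA α n := by
    induction n with
    | zero => simp [cesaroA]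
    | succ n ih =>
      have hfactor : (α + (n + 1)) / (n + 1) = 1 + α * (1 / (n + 1)) := by field_simp; ring
      rw [sum_range_succ, cesaroA_succ, mul_add, hfactor]
      nlinarith [one_le_cesaroA hα.le n, show 0 ≤ α * (1 / ((n : ℝ) + 1)) by positivity]
  exact tendsto_atTop_mono hharmonic
    ((tendsto_const_mul_atTop_of_pos hα).2 Real.tendsto_sum_range_one_div_nat_succ_atTop)

theorem tendsto_cesaroA_mul_cesaroA_atTop {α β : ℝ} (hα : 0 < α) (hβ : 0 ≤ β) :
    Tendsto (fun mn : ℕ × ℕ => cesaroA α mn.1 * cesaroA β mn.2) atTop atTop := by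
  rw [← prod_atTop_atTop_eq]
  exact tendsto_atTop_mono
    (fun mn => le_mul_of_one_le_right (cesaroA_pos (by linarith) _).le (one_le_cesaroA hβ _))
    ((tendsto_cesaroA_atTop hα).comp tendsto_fst)

theorem exists_tendsto_atTop_bracket {b : ℕ → ℝ} (hb : Monotone b)
    (hbtop : Tendsto b atTop atTop) :
    ∃ ι : ℝ → ℕ, Tendsto ι atTop atTop ∧ ∀ t, b 0 ≤ t → b (ι t) ≤ t ∧ t < b (ι t + 1) := by
  classical
  have hex (t : ℝ) : ∃ n, t < b (n + 1) :=
    ((hbtop.comp (tendsto_add_atTop_nat 1)).eventually_gt_atTop t).exists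
  refine ⟨fun t => Nat.find (hex t), tendsto_atTop.2 fun K => ?_,
    fun t ht => ⟨?_, Nat.find_spec (hex t)⟩⟩
  · filter_upwards [eventually_ge_atTop (b K)] with t ht
    by_contra! hlt
    exact (Nat.find_spec (hex t)).not_ge ((hb hlt).trans ht)
  · show b (Nat.find (hex t)) ≤ t
    rcases h : Nat.find (hex t) with _ | n
    · exact ht
    · exact not_lt.1 (Nat.find_min (hex t) (show n < Nat.find (hex t) by omega))

noncomputable def truncAt (t x : ℝ) : ℝ := if |x| ≤ t then x else 0

theorem measurable_truncAt (t : ℝ) : Measurable (truncAt t) :=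
  Measurable.ite (measurableSet_le measurable_id.abs measurable_const) measurable_id
    measurable_const

theorem abs_truncAt_le (t x : ℝ) : |truncAt t x| ≤ |t| := by
  unfold truncAt
  split_ifs with h
  · exact h.trans (le_abs_self t)
  · simp

theorem abs_truncAt_sub_truncAt_le {s t : ℝ} (hst : s ≤ t) (ht : 0 ≤ t) (x : ℝ) :
    |truncAt t x - truncAt s x| ≤ {y : ℝ | s < |y|}.indicator (fun _ => t) x := by
  by_cases hs : |x| ≤ s
  · simp [truncAt, hs, hs.trans hst]
  · simpa [truncAt, hs, not_le.1 hs, abs_of_nonneg ht] using abs_truncAt_le t x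

theorem sq_truncAt_sub_sq_truncAt_le {s t : ℝ} (hst : s ≤ t) (x : ℝ) :
    truncAt t x ^ 2 - truncAt s x ^ 2 ≤ {y : ℝ | s < |y|}.indicator (fun _ => t ^ 2) x := by
  by_cases hs : |x| ≤ s
  · simp [truncAt, hs, hs.trans hst]
  · rw [Set.indicator_of_mem (show x ∈ {y : ℝ | s < |y|} from not_le.1 hs)]
    simp only [truncAt, hs, if_false]
    split_ifs with ht
    · nlinarith [sq_abs x, abs_nonneg x]
    · nlinarith

theorem setOf_le_abs_sum_subset {Ω ι : Type*} {X : ι → Ω → ℝ} (P : Finset ι) (w T : ι → ℝ)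
    {m r : ℝ} (hm : |m| ≤ r / 2) :
    {ω | r ≤ |∑ i ∈ P, w i * X i ω|} ⊆ (⋃ i ∈ P, {ω | T i < |X i ω|}) ∪
      {ω | r / 2 ≤ |∑ i ∈ P, w i * truncAt (T i) (X i ω) - m|} := by
  intro ω hω
  by_contra! hnot
  simp only [Set.mem_union, Set.mem_iUnion, Set.mem_ofPred_eq, not_or, not_exists, not_lt,
    not_le] at hnot hω
  obtain ⟨hsmall, hclose⟩ := hnot
  have htrunc : ∑ i ∈ P, w i * truncAt (T i) (X i ω) = ∑ i ∈ P, w i * X i ω :=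
    sum_congr rfl fun i hi => by simp [truncAt, hsmall i hi]
  rw [htrunc] at hclose
  linarith [abs_sub_abs_le_abs_sub (∑ i ∈ P, w i * X i ω) m]

theorem ProbabilityTheory.IdentDistrib.measureReal_lt_abs_eq {Ω Ω' : Type*} [MeasurableSpace Ω]
    [MeasurableSpace Ω'] {μ : Measure Ω} {μ' : Measure Ω'} {Y : Ω → ℝ} {Y' : Ω' → ℝ}
    (h : IdentDistrib Y Y' μ μ') (t : ℝ) :
    μ.real {ω | t < |Y ω|} = μ'.real {ω | t < |Y' ω|} :=
  congrArg ENNReal.toReal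
    (h.measure_mem_eq (s := {x : ℝ | t < |x|}) (measurableSet_lt measurable_const measurable_abs))

section Truncation

variable {Ω : Type*} [MeasurableSpace Ω] {μ : Measure Ω} [IsProbabilityMeasure μ] {X0 : Ω → ℝ}

theorem memLp_truncAt (hX0 : AEMeasurable X0 μ) (t : ℝ) (p : ENNReal) :
    MemLp (fun ω => truncAt t (X0 ω)) p μ :=
  MemLp.of_bound ((measurable_truncAt t).comp_aemeasurable hX0).aestronglyMeasurable |t|
    (ae_of_all _ fun ω => abs_truncAt_le t (X0 ω))

theorem integrable_truncAt (hX0 : AEMeasurable X0 μ) (t : ℝ) :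
    Integrable (fun ω => truncAt t (X0 ω)) μ :=
  memLp_one_iff_integrable.1 (memLp_truncAt hX0 t 1)

theorem integrable_sq_truncAt (hX0 : AEMeasurable X0 μ) (t : ℝ) :
    Integrable (fun ω => truncAt t (X0 ω) ^ 2) μ :=
  (memLp_truncAt hX0 t 2).integrable_sq

theorem abs_integral_truncAt_sub_le (hX0 : Measurable X0) {s t : ℝ} (hst : s ≤ t)
    (ht : 0 ≤ t) :
    |∫ ω, truncAt t (X0 ω) ∂μ - ∫ ω, truncAt s (X0 ω) ∂μ| ≤ t * μ.real {ω | s < |X0 ω|} := by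
  have hset : MeasurableSet {ω | s < |X0 ω|} := measurableSet_lt measurable_const hX0.abs
  have hint (u : ℝ) := integrable_truncAt (μ := μ) hX0.aemeasurable u
  rw [← integral_sub (hint t) (hint s), mul_comm, ← smul_eq_mul,
    ← integral_indicator_const _ hset]
  exact abs_integral_le_integral_abs.trans <| integral_mono ((hint t).sub (hint s)).abs
    ((integrable_const t).indicator hset) fun ω => abs_truncAt_sub_truncAt_le hst ht (X0 ω)

theorem integral_sq_truncAt_sub_le (hX0 : Measurable X0) {s t : ℝ} (hst : s ≤ t) :
    ∫ ω, truncAt t (X0 ω) ^ 2 ∂μ - ∫ ω, truncAt s (X0 ω) ^ 2 ∂μ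
      ≤ t ^ 2 * μ.real {ω | s < |X0 ω|} := by
  have hset : MeasurableSet {ω | s < |X0 ω|} := measurableSet_lt measurable_const hX0.abs
  have hint (u : ℝ) := integrable_sq_truncAt (μ := μ) hX0.aemeasurable u
  rw [← integral_sub (hint t) (hint s), mul_comm, ← smul_eq_mul,
    ← integral_indicator_const _ hset]
  exact integral_mono ((hint t).sub (hint s)) ((integrable_const _).indicator hset)
    fun ω => sq_truncAt_sub_sq_truncAt_le hst (X0 ω)

theorem integral_sq_truncAt_le (hX0 : AEMeasurable X0 μ) (t : ℝ) :
    ∫ ω, truncAt t (X0 ω) ^ 2 ∂μ ≤ t ^ 2 := by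
  calc ∫ ω, truncAt t (X0 ω) ^ 2 ∂μ ≤ ∫ _ω, t ^ 2 ∂μ :=
        integral_mono (integrable_sq_truncAt hX0 t) (integrable_const _) fun ω => by
          simpa [sq_abs] using pow_le_pow_left₀ (abs_nonneg _) (abs_truncAt_le t (X0 ω)) 2
    _ = t ^ 2 := by simp

theorem tendsto_mul_measureReal_lt_abs
    (hweak : Tendsto (fun n : ℕ => (n : ℝ) * μ.real {ω | (n : ℝ) < |X0 ω|}) atTop (𝓝 0)) :
    Tendsto (fun s : ℝ => s * μ.real {ω | s < |X0 ω|}) atTop (𝓝 0) := by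
  have htail_anti : Antitone fun s : ℝ => μ.real {ω | s < |X0 ω|} := fun s t hst =>
    measureReal_mono fun ω hω => hst.trans_lt hω
  have hfloor : Tendsto
      (fun s : ℝ => 2 * ((⌊s⌋₊ : ℝ) * μ.real {ω | (⌊s⌋₊ : ℝ) < |X0 ω|})) atTop (𝓝 0) := by
    simpa using (hweak.comp tendsto_nat_floor_atTop).const_mul 2
  refine squeeze_zero' ?_ ?_ hfloor
  · filter_upwards [eventually_ge_atTop 0] with s hs using mul_nonneg hs measureReal_nonneg
  · filter_upwards [eventually_ge_atTop 1] with s hs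
    have hfloor_one : (1 : ℝ) ≤ ⌊s⌋₊ := by exact_mod_cast (Nat.one_le_floor_iff s).2 hs
    have hs_le : s ≤ 2 * ⌊s⌋₊ := by linarith [Nat.lt_floor_add_one s]
    calc s * μ.real {ω | s < |X0 ω|} ≤ (2 * ⌊s⌋₊) * μ.real {ω | (⌊s⌋₊ : ℝ) < |X0 ω|} :=
          mul_le_mul hs_le (htail_anti (Nat.floor_le (by linarith))) measureReal_nonneg
            (by positivity)
      _ = _ := by ring

theorem integral_sq_truncAt_le_of_tail (hX0 : Measurable X0) {M δ : ℝ} (hM : 0 < M)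
    (htail : ∀ s, M ≤ s → s * μ.real {ω | s < |X0 ω|} ≤ δ) {t : ℝ} (ht : 0 ≤ t) :
    ∫ ω, truncAt t (X0 ω) ^ 2 ∂μ ≤ 4 * M ^ 2 + 4 * δ * t := by
  have hδ : 0 ≤ δ := (mul_nonneg hM.le measureReal_nonneg).trans (htail M le_rfl)
  -- For `t > 2M` the second moment truncated at `t` exceeds the one truncated at `t / 2` by at
  -- most `t² P(|X| > t / 2) ≤ 2δt`.
  have hdyadic (n : ℕ) : ∀ t, 0 ≤ t → t ≤ 2 ^ n * (2 * M) →
      ∫ ω, truncAt t (X0 ω) ^ 2 ∂μ ≤ 4 * M ^ 2 + 4 * δ * t := by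
    induction n with
    | zero =>
      intro t ht htM
      nlinarith [integral_sq_truncAt_le (μ := μ) hX0.aemeasurable t]
    | succ n ih =>
      intro t ht htM
      by_cases ht2M : t ≤ 2 * M
      · nlinarith [integral_sq_truncAt_le (μ := μ) hX0.aemeasurable t]
      have hhalf := ih (t / 2) (by positivity) (by rw [pow_succ] at htM; linarith)
      have hdiff := integral_sq_truncAt_sub_le (μ := μ) hX0 (half_le_self ht)
      have htail_half := htail (t / 2) (by linarith)
      nlinarith
  obtain ⟨n, hn⟩ := pow_unbounded_of_one_lt (t / (2 * M)) one_lt_two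
  exact hdyadic n t ht (by rw [div_lt_iff₀ (by positivity)] at hn; linarith)

theorem eventually_integral_sq_truncAt_le (hX0 : Measurable X0)
    (htail : Tendsto (fun s : ℝ => s * μ.real {ω | s < |X0 ω|}) atTop (𝓝 0))
    {δ : ℝ} (hδ : 0 < δ) :
    ∀ᶠ t in atTop, ∫ ω, truncAt t (X0 ω) ^ 2 ∂μ ≤ δ * t := by
  obtain ⟨M, hM⟩ :=
    (htail.eventually_le_const (show 0 < δ / 8 by positivity)).exists_forall_of_atTop
  filter_upwards [eventually_ge_atTop (8 * max M 1 ^ 2 / δ)] with t ht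
  have hψ := integral_sq_truncAt_le_of_tail hX0 (M := max M 1) (by positivity)
    (fun s hs => hM s ((le_max_left _ _).trans hs)) (le_trans (by positivity) ht)
  rw [div_le_iff₀ hδ] at ht
  linarith

theorem tendsto_integral_truncAt_of_tendsto_comp (hX0 : Measurable X0) {b : ℕ → ℝ} {C : ℝ}
    (hb : Monotone b) (hbtop : Tendsto b atTop atTop) (hbC : ∀ n, b (n + 1) ≤ C * b n)
    (htail : Tendsto (fun s : ℝ => s * μ.real {ω | s < |X0 ω|}) atTop (𝓝 0))
    (hcb : Tendsto (fun n => ∫ ω, truncAt (b n) (X0 ω) ∂μ) atTop (𝓝 0)) :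
    Tendsto (fun t => ∫ ω, truncAt t (X0 ω) ∂μ) atTop (𝓝 0) := by
  obtain ⟨ι, hι, hbracket⟩ := exists_tendsto_atTop_bracket hb hbtop
  have hdiff : Tendsto
      (fun t => ∫ ω, truncAt t (X0 ω) ∂μ - ∫ ω, truncAt (b (ι t)) (X0 ω) ∂μ) atTop (𝓝 0) := by
    refine squeeze_zero_norm' ?_ (by simpa using (htail.comp (hbtop.comp hι)).const_mul C)
    filter_upwards [eventually_ge_atTop (max (b 0) 0)] with t ht
    obtain ⟨hlow, hhigh⟩ := hbracket t (le_of_max_le_left ht)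
    calc _ ≤ t * μ.real {ω | b (ι t) < |X0 ω|} :=
          abs_integral_truncAt_sub_le hX0 hlow (le_of_max_le_right ht)
      _ ≤ C * b (ι t) * μ.real {ω | b (ι t) < |X0 ω|} :=
          mul_le_mul_of_nonneg_right (hhigh.le.trans (hbC _)) measureReal_nonneg
      _ = C * (b (ι t) * μ.real {ω | b (ι t) < |X0 ω|}) := mul_assoc _ _ _
  simpa using hdiff.add (hcb.comp hι)

theorem tendsto_integral_truncAt_of_cesaro (hX0 : Measurable X0) {α β : ℝ} (hα : 0 < α)
    (hβ : 0 ≤ β) (htail : Tendsto (fun s : ℝ => s * μ.real {ω | s < |X0 ω|}) atTop (𝓝 0))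
    (hgrid : Tendsto (fun mn : ℕ × ℕ => ∫ ω, truncAt (cesaroA α mn.1 * cesaroA β mn.2) (X0 ω) ∂μ)
      atTop (𝓝 0)) :
    Tendsto (fun t => ∫ ω, truncAt t (X0 ω) ∂μ) atTop (𝓝 0) := by
  have hdiag : Tendsto (fun n : ℕ => (n, n)) atTop atTop := by
    rw [← prod_atTop_atTop_eq]
    exact tendsto_id.prodMk tendsto_id
  have hb_mono : Monotone fun n => cesaroA α n * cesaroA β n := fun m n hmn =>
    mul_le_mul (cesaroA_mono hα.le hmn) (cesaroA_mono hβ hmn)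
      (cesaroA_pos (by linarith) _).le (cesaroA_pos (by linarith) _).le
  have hb_succ (n : ℕ) : cesaroA α (n + 1) * cesaroA β (n + 1) ≤
      (1 + α) * (1 + β) * (cesaroA α n * cesaroA β n) :=
    (mul_le_mul (cesaroA_succ_le hα.le n) (cesaroA_succ_le hβ n) (cesaroA_pos (by linarith) _).le
      (mul_nonneg (by linarith) (cesaroA_pos (by linarith) n).le)).trans_eq (by ring)
  have hb_top := (tendsto_cesaroA_mul_cesaroA_atTop hα hβ).comp hdiag
  have hc_diag := hgrid.comp hdiag
  exact tendsto_integral_truncAt_of_tendsto_comp hX0 hb_mono hb_top hb_succ htail hc_diag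

end Truncation

section WeightedSums

variable {Ω : Type*} [MeasurableSpace Ω] {μ : Measure Ω} [IsProbabilityMeasure μ] {ι : Type*}
  {X : ι → Ω → ℝ} {X0 : Ω → ℝ}

theorem integral_sum_truncAt (hident : ∀ i, IdentDistrib (X i) X0 μ μ) (P : Finset ι)
    (w T : ι → ℝ) :
    ∫ ω, ∑ i ∈ P, w i * truncAt (T i) (X i ω) ∂μ
      = ∑ i ∈ P, w i * ∫ ω, truncAt (T i) (X0 ω) ∂μ := by
  rw [integral_finsetSum P fun i _ =>
    (integrable_truncAt (hident i).aemeasurable_fst (T i)).const_mul (w i)]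
  refine sum_congr rfl fun i _ => ?_
  rw [integral_const_mul]
  exact congrArg _ ((hident i).comp (measurable_truncAt (T i))).integral_eq

theorem variance_sum_truncAt_le (hindep : iIndepFun X μ)
    (hident : ∀ i, IdentDistrib (X i) X0 μ μ) (P : Finset ι) (w T : ι → ℝ) :
    Var[fun ω => ∑ i ∈ P, w i * truncAt (T i) (X i ω); μ]
      ≤ ∑ i ∈ P, w i ^ 2 * ∫ ω, truncAt (T i) (X0 ω) ^ 2 ∂μ := by
  set Y : ι → Ω → ℝ := fun i ω => w i * truncAt (T i) (X i ω)
  have hYindep : iIndepFun Y μ :=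
    hindep.comp (fun i x => w i * truncAt (T i) x) fun i => (measurable_truncAt (T i)).const_mul _
  have hYmemLp (i : ι) : MemLp (Y i) 2 μ :=
    (memLp_truncAt (hident i).aemeasurable_fst (T i) 2).const_mul (w i)
  have hsum : (fun ω => ∑ i ∈ P, Y i ω) = ∑ i ∈ P, Y i := by ext ω; simp
  rw [hsum, IndepFun.variance_sum (fun i _ => hYmemLp i)
    fun i _ j _ hij => hYindep.indepFun hij]
  refine sum_le_sum fun i _ => ?_
  rw [variance_const_mul]
  refine mul_le_mul_of_nonneg_left ?_ (sq_nonneg _)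
  refine (variance_le_expectation_sq ((measurable_truncAt (T i)).comp_aemeasurable
    (hident i).aemeasurable_fst).aestronglyMeasurable).trans_eq ?_
  exact ((hident i).comp ((measurable_truncAt (T i)).pow_const 2)).integral_eq

theorem measureReal_le_abs_sum_le_of_truncation (hindep : iIndepFun X μ)
    (hident : ∀ i, IdentDistrib (X i) X0 μ μ) (P : Finset ι) (w T : ι → ℝ) {r : ℝ} (hr : 0 < r)
    (hmean : |∑ i ∈ P, w i * ∫ ω, truncAt (T i) (X0 ω) ∂μ| ≤ r / 2) :
    μ.real {ω | r ≤ |∑ i ∈ P, w i * X i ω|}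
      ≤ ∑ i ∈ P, μ.real {ω | T i < |X0 ω|}
        + 4 * (∑ i ∈ P, w i ^ 2 * ∫ ω, truncAt (T i) (X0 ω) ^ 2 ∂μ) / r ^ 2 := by
  set Y : Ω → ℝ := fun ω => ∑ i ∈ P, w i * truncAt (T i) (X i ω)
  have hYmemLp : MemLp Y 2 μ := memLp_finsetSum P fun i _ =>
    (memLp_truncAt (hident i).aemeasurable_fst (T i) 2).const_mul (w i)
  have hmeanY : ∫ ω, Y ω ∂μ = ∑ i ∈ P, w i * ∫ ω, truncAt (T i) (X0 ω) ∂μ :=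
    integral_sum_truncAt hident P w T
  have hcheb : μ.real {ω | r / 2 ≤ |Y ω - ∫ ω, Y ω ∂μ|} ≤ Var[Y; μ] / (r / 2) ^ 2 :=
    ENNReal.toReal_le_of_le_ofReal (div_nonneg (variance_nonneg _ _) (by positivity))
      (meas_ge_le_variance_div_sq hYmemLp (by positivity))
  calc μ.real {ω | r ≤ |∑ i ∈ P, w i * X i ω|}
      ≤ μ.real (⋃ i ∈ P, {ω | T i < |X i ω|}) + μ.real {ω | r / 2 ≤ |Y ω - ∫ ω, Y ω ∂μ|} :=
        (measureReal_mono (setOf_le_abs_sum_subset P w T (hmeanY ▸ hmean))).trans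
          (measureReal_union_le _ _)
    _ ≤ ∑ i ∈ P, μ.real {ω | T i < |X0 ω|}
          + 4 * (∑ i ∈ P, w i ^ 2 * ∫ ω, truncAt (T i) (X0 ω) ^ 2 ∂μ) / r ^ 2 := by
      gcongr
      · exact (measureReal_biUnion_finset_le P _).trans_eq
          (sum_congr rfl fun i _ => (hident i).measureReal_lt_abs_eq (T i))
      · refine hcheb.trans (le_of_eq_of_le (b := 4 * Var[Y; μ] / r ^ 2) (by ring) ?_)
        gcongr
        exact variance_sum_truncAt_le hindep hident P w T

theorem measureReal_le_abs_weighted_mean_le (hindep : iIndepFun X μ)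
    (hident : ∀ i, IdentDistrib (X i) X0 μ μ) {P : Finset ι} (hP : P.Nonempty) {w : ι → ℝ}
    (hw0 : ∀ i ∈ P, 0 < w i) (hw1 : ∀ i ∈ P, w i ≤ 1) {t₀ ε δ₁ δ₂ : ℝ} (hε : 0 < ε)
    (ht₀ : t₀ ≤ ∑ i ∈ P, w i) (htail : ∀ t, t₀ ≤ t → t * μ.real {ω | t < |X0 ω|} ≤ δ₁)
    (hsq : ∀ t, t₀ ≤ t → ∫ ω, truncAt t (X0 ω) ^ 2 ∂μ ≤ δ₂ * t)
    (hmean : ∀ t, t₀ ≤ t → |∫ ω, truncAt t (X0 ω) ∂μ| ≤ ε / 2) :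
    μ.real {ω | ε ≤ |(∑ i ∈ P, w i)⁻¹ * ∑ i ∈ P, w i * X i ω|} ≤ δ₁ + 4 * δ₂ / ε ^ 2 := by
  set a := ∑ i ∈ P, w i
  have ha : 0 < a := sum_pos hw0 hP
  set T : ι → ℝ := fun i => a / w i
  have hT (i : ι) (hi : i ∈ P) : a ≤ T i := le_div_self ha.le (hw0 i hi) (hw1 i hi)
  have hT₀ (i : ι) (hi : i ∈ P) : t₀ ≤ T i := ht₀.trans (hT i hi)
  have hwT (i : ι) (hi : i ∈ P) : w i * T i = a := mul_div_cancel₀ a (hw0 i hi).ne'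
  have hset : {ω | ε ≤ |a⁻¹ * ∑ i ∈ P, w i * X i ω|}
      = {ω | a * ε ≤ |∑ i ∈ P, w i * X i ω|} := by
    ext ω
    rw [Set.mem_ofPred, Set.mem_ofPred, abs_mul, abs_inv, abs_of_pos ha, le_inv_mul_iff₀ ha]
  have hmeanT : |∑ i ∈ P, w i * ∫ ω, truncAt (T i) (X0 ω) ∂μ| ≤ a * ε / 2 :=
    calc _ ≤ ∑ i ∈ P, w i * (ε / 2) :=
          (abs_sum_le_sum_abs _ _).trans <| sum_le_sum fun i hi => by
            rw [abs_mul, abs_of_pos (hw0 i hi)]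
            exact mul_le_mul_of_nonneg_left (hmean _ (hT₀ i hi)) (hw0 i hi).le
      _ = a * ε / 2 := by rw [← sum_mul]; ring
  have htailT : ∑ i ∈ P, μ.real {ω | T i < |X0 ω|} ≤ δ₁ :=
    calc _ ≤ ∑ i ∈ P, δ₁ / a * w i := sum_le_sum fun i hi => by
            calc _ ≤ δ₁ / T i := (le_div_iff₀' (ha.trans_le (hT i hi))).2 (htail _ (hT₀ i hi))
              _ = δ₁ / a * w i := by rw [← hwT i hi]; field_simp [(hw0 i hi).ne']
      _ = δ₁ := by rw [← mul_sum, div_mul_cancel₀ _ ha.ne']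
  have hsqT : ∑ i ∈ P, w i ^ 2 * ∫ ω, truncAt (T i) (X0 ω) ^ 2 ∂μ ≤ δ₂ * a ^ 2 :=
    calc _ ≤ ∑ i ∈ P, δ₂ * a * w i := sum_le_sum fun i hi => by
            calc _ ≤ w i ^ 2 * (δ₂ * T i) :=
                  mul_le_mul_of_nonneg_left (hsq _ (hT₀ i hi)) (sq_nonneg _)
              _ = δ₂ * a * w i := by rw [← hwT i hi]; ring
      _ = δ₂ * a ^ 2 := by rw [← mul_sum]; ring
  rw [hset]
  refine (measureReal_le_abs_sum_le_of_truncation hindep hident P w T (by positivity)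
    hmeanT).trans (add_le_add htailT ?_)
  calc _ ≤ 4 * (δ₂ * a ^ 2) / (a * ε) ^ 2 := by gcongr
    _ = 4 * δ₂ / ε ^ 2 := by field_simp

end WeightedSums

theorem measureReal_le_abs_cesaroMean_le {Ω : Type*} [MeasurableSpace Ω] {μ : Measure Ω}
    [IsProbabilityMeasure μ] {X : ℕ × ℕ → Ω → ℝ} {X0 : Ω → ℝ} (hindep : iIndepFun X μ)
    (hident : ∀ kl, IdentDistrib (X kl) X0 μ μ) {α β : ℝ} (hα : 0 < α) (hα1 : α ≤ 1)
    (hβ : 0 < β) (hβ1 : β ≤ 1) (m n : ℕ) {t₀ ε δ₁ δ₂ : ℝ} (hε : 0 < ε)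
    (ht₀ : t₀ ≤ cesaroA α m * cesaroA β n)
    (htail : ∀ t, t₀ ≤ t → t * μ.real {ω | t < |X0 ω|} ≤ δ₁)
    (hsq : ∀ t, t₀ ≤ t → ∫ ω, truncAt t (X0 ω) ^ 2 ∂μ ≤ δ₂ * t)
    (hmean : ∀ t, t₀ ≤ t → |∫ ω, truncAt t (X0 ω) ∂μ| ≤ ε / 2) :
    μ.real {ω | ε ≤ |(cesaroA α m * cesaroA β n)⁻¹ *
      ∑ k ∈ range (m + 1), ∑ l ∈ range (n + 1),
        cesaroA (α - 1) (m - k) * cesaroA (β - 1) (n - l) * X (k, l) ω|}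
      ≤ δ₁ + 4 * δ₂ / ε ^ 2 := by
  have hbound := measureReal_le_abs_weighted_mean_le hindep hident
    (P := range (m + 1) ×ˢ range (n + 1))
    (w := fun kl => cesaroA (α - 1) (m - kl.1) * cesaroA (β - 1) (n - kl.2))
    ⟨(0, 0), by simp⟩
    (fun kl _ => mul_pos (cesaroA_pos (by linarith) _) (cesaroA_pos (by linarith) _))
    (fun kl _ => mul_le_one₀ (cesaroA_le_one (by linarith) (by linarith) _)
      (cesaroA_pos (by linarith) _).le (cesaroA_le_one (by linarith) (by linarith) _))
    hε (by rwa [sum_product, sum_sum_cesaroA_sub_one_mul]) htail hsq hmean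
  simpa only [sum_product, sum_sum_cesaroA_sub_one_mul] using hbound

theorem cesaro_field_wlln_of_truncated_mean_small_general
    {Ω : Type*} [MeasureSpace Ω] [IsProbabilityMeasure (ℙ : Measure Ω)]
    (α β : ℝ) (hα0 : 0 < α) (hαβ : α ≤ β) (hβ1 : β ≤ 1)
    (X : ℕ × ℕ → Ω → ℝ) (X0 : Ω → ℝ)
    (hmeas0 : Measurable X0)
    (hindep : iIndepFun X ℙ)
    (hident : ∀ kl, IdentDistrib (X kl) X0 ℙ ℙ)
    (hweak : Tendsto (fun n : ℕ => (n : ℝ) * (ℙ {ω | (n : ℝ) < |X0 ω|}).toReal)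
      atTop (𝓝 0))
    (hmu : Tendsto (fun mn : ℕ × ℕ =>
        (∑ k ∈ Finset.range (mn.1 + 1), ∑ l ∈ Finset.range (mn.2 + 1),
          cesaroA (α - 1) (mn.1 - k) * cesaroA (β - 1) (mn.2 - l) *
            ∫ ω, (if |X0 ω| ≤ cesaroA α mn.1 * cesaroA β mn.2 then X0 ω else 0) ∂ℙ)
          / (cesaroA α mn.1 * cesaroA β mn.2))
      atTop (𝓝 0)) :
    TendstoInMeasure ℙ
      (fun mn : ℕ × ℕ => fun ω =>
        (cesaroA α mn.1 * cesaroA β mn.2)⁻¹ *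
          ∑ k ∈ Finset.range (mn.1 + 1), ∑ l ∈ Finset.range (mn.2 + 1),
            cesaroA (α - 1) (mn.1 - k) * cesaroA (β - 1) (mn.2 - l) * X (k, l) ω)
      atTop (fun _ => (0 : ℝ)) := by
  have hβ0 : 0 < β := hα0.trans_le hαβ
  have htail := tendsto_mul_measureReal_lt_abs hweak
  -- `hmu` says `E[X 1{|X| ≤ a}] → 0` along the grid, as its weights sum to `a = A_m^α A_n^β`.
  have hc := tendsto_integral_truncAt_of_cesaro hmeas0 hα0 hβ0.le htail <| hmu.congr fun mn => by
    simp only [← sum_mul, sum_sum_cesaroA_sub_one_mul]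
    exact mul_div_cancel_left₀ _
      (mul_pos (cesaroA_pos (by linarith) _) (cesaroA_pos (by linarith) _)).ne'
  rw [tendstoInMeasure_iff_measureReal_dist]
  intro ε hε
  refine Metric.tendsto_nhds.2 fun δ hδ => ?_
  have hc_small := hc.abs.eventually_le_const (show |(0 : ℝ)| < ε / 2 by simpa using hε)
  obtain ⟨t₀, ht₀⟩ := ((htail.eventually_le_const (show 0 < δ / 4 by positivity)).and
    ((eventually_integral_sq_truncAt_le hmeas0 htail (show 0 < ε ^ 2 * δ / 16 by positivity)).and
      hc_small)).exists_forall_of_atTop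
  filter_upwards [(tendsto_cesaroA_mul_cesaroA_atTop hα0 hβ0.le).eventually_ge_atTop t₀]
    with mn hmn
  have hbound := measureReal_le_abs_cesaroMean_le hindep hident hα0 (hαβ.trans hβ1) hβ0 hβ1
    mn.1 mn.2 hε hmn (fun t ht => (ht₀ t ht).1) (fun t ht => (ht₀ t ht).2.1)
    (fun t ht => (ht₀ t ht).2.2)
  simp only [Real.dist_0_eq_abs, abs_of_nonneg measureReal_nonneg]
  refine hbound.trans_lt ?_
  field_simp
  linarith

theorem cesaro_field_wlln_of_truncated_mean_small
    {Ω : Type*} [MeasureSpace Ω] [IsProbabilityMeasure (ℙ : Measure Ω)]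
    (α β : ℝ) (hα0 : 0 < α) (hαβ : α ≤ β) (hβ1 : β ≤ 1)
    (X : ℕ × ℕ → Ω → ℝ) (X0 : Ω → ℝ)
    (hmeas : ∀ kl, Measurable (X kl)) (hmeas0 : Measurable X0)
    (hindep : iIndepFun X ℙ)
    (hident : ∀ kl, IdentDistrib (X kl) X0 ℙ ℙ)
    (hweak : Tendsto (fun n : ℕ => (n : ℝ) * (ℙ {ω | (n : ℝ) < |X0 ω|}).toReal)
      atTop (𝓝 0))
    (hmu : Tendsto (fun mn : ℕ × ℕ =>
        (∑ k ∈ Finset.range (mn.1 + 1), ∑ l ∈ Finset.range (mn.2 + 1),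
          cesaroA (α - 1) (mn.1 - k) * cesaroA (β - 1) (mn.2 - l) *
            ∫ ω, (if |X0 ω| ≤ cesaroA α mn.1 * cesaroA β mn.2 then X0 ω else 0) ∂ℙ)
          / (cesaroA α mn.1 * cesaroA β mn.2))
      atTop (𝓝 0)) :
    TendstoInMeasure ℙ
      (fun mn : ℕ × ℕ => fun ω =>
        (cesaroA α mn.1 * cesaroA β mn.2)⁻¹ *
          ∑ k ∈ Finset.range (mn.1 + 1), ∑ l ∈ Finset.range (mn.2 + 1),
            cesaroA (α - 1) (mn.1 - k) * cesaroA (β - 1) (mn.2 - l) * X (k, l) ω)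
      atTop (fun _ => (0 : ℝ)) :=
  cesaro_field_wlln_of_truncated_mean_small_general α β hα0 hαβ hβ1 X X0 hmeas0 hindep hident hweak
    hmu
end

section
/- Let 0 < α ≤ β ≤ 1 and let X be a real random variable. Then Σ_{m,n ≥ 1} Σ_{k=0}^m Σ_{l=0}^n P(A_{m-k}^{α-1} A_{n-l}^{β-1} |X| > A_m^α A_n^β) < ∞ if and only if Σ_{m,n ≥ 1} Σ_{k=1}^m Σ_{l=1}^n P(k^{α-1} l^{β-1} |X| > m^α n^β) < ∞. -/
/-!
With `f t = ℙ(|X| > t)`, every summand of either series is `f` evaluated at a product of two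
weights. Euler's limit formula gives `A_n^γ ≍ n^γ`, so `A_N^γ / A_k^{γ-1} ≍ N^γ k^{1-γ}` uniformly
in `N ≥ 1` and `k ≥ 0` (reading `k = 0` as `k = 1`, which at most doubles each inner sum). Hence
both series are squeezed between constant multiples of
`S(c) = ∑_{1 ≤ k ≤ N, 1 ≤ l ≤ M} f(c · N^α k^{1-α} · M^β l^{1-β})` for suitable constants
`c > 0`, and it remains to see that the finiteness of `S(c)` does not depend on `c`. Summing
over one pair of indices at a time, this reduces to one weight `N^γ k^{1-γ}` with `0 < γ ≤ 1`,
which is homogeneous of degree one and monotone in both variables: replacing `(N, k)` by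
`(⌊N/r⌋, ⌊k/r⌋)`, a map with fibres of size `r²`, divides it by at least `r`, and the boundary
terms with `k < r` are controlled by the terms with `k = 1`.
-/

open MeasureTheory ProbabilityTheory Filter Finset Topology

open Real ENNReal

noncomputable def powerWeight (γ x y : ℝ) : ℝ := x ^ γ / y ^ (γ - 1)

section PowerWeight

variable {γ x y : ℝ}

lemma powerWeight_nonneg (hx : 0 ≤ x) (hy : 0 ≤ y) : 0 ≤ powerWeight γ x y :=
  div_nonneg (rpow_nonneg hx γ) (rpow_nonneg hy _)

@[simp]
lemma powerWeight_one_one : powerWeight γ 1 1 = 1 := by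
  simp [powerWeight]

lemma powerWeight_div (hx : 0 ≤ x) (hy : 0 ≤ y) {r : ℝ} (hr : 0 < r) :
    powerWeight γ (x / r) (y / r) = powerWeight γ x y / r := by
  rw [powerWeight, powerWeight, div_rpow hx hr.le, div_rpow hy hr.le, rpow_sub_one hr.ne']
  field_simp

lemma powerWeight_le_powerWeight (hγ0 : 0 ≤ γ) (hγ1 : γ ≤ 1) {x' y' : ℝ} (hx : 0 ≤ x)
    (hxx' : x ≤ x') (hy : 0 < y) (hyy' : y ≤ y') : powerWeight γ x y ≤ powerWeight γ x' y' :=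
  div_le_div₀ (rpow_nonneg (hx.trans hxx') γ) (rpow_le_rpow hx hxx' hγ0)
    (rpow_pos_of_pos (hy.trans_le hyy') _) (rpow_le_rpow_of_nonpos hy hyy' (by linarith))

lemma one_le_powerWeight (hγ0 : 0 ≤ γ) (hγ1 : γ ≤ 1) (hy : 1 ≤ y) (hyx : y ≤ x) :
    1 ≤ powerWeight γ x y :=
  powerWeight_one_one (γ := γ) ▸
    powerWeight_le_powerWeight hγ0 hγ1 zero_le_one (hy.trans hyx) one_pos hy

variable {N k r : ℕ}

lemma powerWeight_nat_div_le (hγ0 : 0 ≤ γ) (hγ1 : γ ≤ 1) (hr : 0 < r) (hrk : r ≤ k) :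
    powerWeight γ ↑(N / r) ↑(k / r) ≤ powerWeight γ N k / r := by
  have hr' : (0 : ℝ) < r := by exact_mod_cast hr
  rw [← powerWeight_div N.cast_nonneg k.cast_nonneg hr']
  exact powerWeight_le_powerWeight hγ0 hγ1 (Nat.cast_nonneg _) Nat.cast_div_le
    (by exact_mod_cast Nat.div_pos hrk hr) Nat.cast_div_le

lemma powerWeight_nat_div_one_le (hγ0 : 0 ≤ γ) (hγ1 : γ ≤ 1) (hr : 0 < r) (hk : 1 ≤ k) :
    powerWeight γ ↑(N / r) 1 ≤ powerWeight γ N k / (r : ℝ) ^ γ := by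
  have hr' : (0 : ℝ) < r := by exact_mod_cast hr
  calc powerWeight γ ↑(N / r) 1 ≤ powerWeight γ (N / r) 1 :=
        powerWeight_le_powerWeight hγ0 hγ1 (Nat.cast_nonneg _) Nat.cast_div_le one_pos le_rfl
    _ = powerWeight γ N 1 / (r : ℝ) ^ γ := by
        simp [powerWeight, div_rpow N.cast_nonneg hr'.le]
    _ ≤ powerWeight γ N k / (r : ℝ) ^ γ := by
        gcongr
        exact powerWeight_le_powerWeight hγ0 hγ1 N.cast_nonneg le_rfl one_pos
          (by exact_mod_cast hk)

end PowerWeight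

lemma ENNReal.tsum_nat_div (r : ℕ) [NeZero r] (G : ℕ → ℝ≥0∞) :
    ∑' n : ℕ, G (n / r) = r * ∑' q, G q := by
  rw [show ∑' n : ℕ, G (n / r) = ∑' p : ℕ × Fin r, G p.1 from
    (Nat.divModEquiv r).tsum_eq (fun p => G p.1), ENNReal.tsum_prod']
  simp [ENNReal.tsum_mul_left]

lemma ENNReal.tsum_prod_div (r : ℕ) [NeZero r] (G : ℕ × ℕ → ℝ≥0∞) :
    ∑' p : ℕ × ℕ, G (p.1 / r, p.2 / r) = r * r * ∑' q, G q := by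
  rw [ENNReal.tsum_prod', ENNReal.tsum_prod']
  conv_lhs => enter [1, a]; rw [ENNReal.tsum_nat_div r (fun b => G (a / r, b))]
  rw [ENNReal.tsum_mul_left, ENNReal.tsum_nat_div r (fun a => ∑' b, G (a, b)), mul_assoc]

lemma ENNReal.tsum_ite_lt (r : ℕ) (a : ℝ≥0∞) : ∑' k : ℕ, (if k < r then a else 0) = r * a := by
  rw [tsum_eq_sum (s := range r) fun k hk => if_neg (by simpa using hk)]
  simp [Finset.sum_ite_of_true]

noncomputable def powerTerm (h : ℝ → ℝ≥0∞) (γ c : ℝ) (p : ℕ × ℕ) : ℝ≥0∞ :=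
  if 1 ≤ p.2 ∧ p.2 ≤ p.1 then h (c * powerWeight γ p.1 p.2) else 0

noncomputable def powerTail (h : ℝ → ℝ≥0∞) (γ c : ℝ) : ℝ≥0∞ :=
  ∑' p, powerTerm h γ c p

section PowerTail

variable {h : ℝ → ℝ≥0∞} {α β γ : ℝ}

lemma tsum_powerTerm_fst (c : ℝ) (N : ℕ) :
    ∑' k, powerTerm h γ c (N, k) = ∑ k ∈ Icc 1 N, h (c * powerWeight γ N k) := by
  rw [tsum_eq_sum (s := Icc 1 N) fun k hk => by rw [powerTerm, if_neg (by simpa using hk)]]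
  exact sum_congr rfl fun k hk => if_pos (by simpa using hk)

lemma powerTail_eq (h : ℝ → ℝ≥0∞) (γ c : ℝ) :
    powerTail h γ c = ∑' n : ℕ, ∑ k ∈ Icc 1 (n + 1), h (c * powerWeight γ ((n : ℝ) + 1) k) := by
  rw [powerTail, ENNReal.tsum_prod', tsum_eq_zero_add' ENNReal.summable]
  simp [tsum_powerTerm_fst]

lemma powerTail_antitone (hh : Antitone h) : Antitone (powerTail h γ) := fun c c' hcc' =>
  ENNReal.tsum_le_tsum fun p => by
    unfold powerTerm
    split_ifs
    exacts [hh (mul_le_mul_of_nonneg_right hcc' (powerWeight_nonneg p.1.cast_nonneg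
      p.2.cast_nonneg)), le_rfl]

/-- The block map `(N, k) ↦ (N / r, k / r)` divides the weight by at least `r`; for `k < r` we
use `(N / r, 1)` instead, and for `N < r` as well the crude bound `h c`. -/
lemma powerTerm_le (hh : Antitone h) (hγ0 : 0 ≤ γ) (hγ1 : γ ≤ 1) {c₀ c : ℝ} (hc₀ : 0 ≤ c₀)
    (hc : 0 < c) {r : ℕ} (hr : 1 ≤ r) (hcr : c₀ ≤ c * r ^ γ) (p : ℕ × ℕ) :
    powerTerm h γ c p ≤ powerTerm h γ c₀ (p.1 / r, p.2 / r) +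
      if p.2 < r then powerTerm h γ c₀ (p.1 / r, 1) + (if p.1 < r then h c else 0) else 0 := by
  obtain ⟨N, k⟩ := p
  by_cases hdom : 1 ≤ k ∧ k ≤ N
  swap
  · simp [powerTerm, hdom]
  rw [powerTerm, if_pos hdom]
  have hk : (1 : ℝ) ≤ k := by exact_mod_cast hdom.1
  have hkN : (k : ℝ) ≤ N := by exact_mod_cast hdom.2
  have hr' : (0 : ℝ) < r := by exact_mod_cast hr
  have hw := one_le_powerWeight hγ0 hγ1 hk hkN
  rcases lt_or_ge k r with hkr | hrk
  · rw [if_pos hkr]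
    refine le_add_left ?_
    rcases lt_or_ge N r with hNr | hrN
    · rw [if_pos hNr]
      exact le_add_left (hh (by nlinarith))
    · rw [powerTerm, if_pos ⟨le_rfl, Nat.div_pos hrN hr⟩]
      refine le_add_right (hh ?_)
      have hrγ : 0 < (r : ℝ) ^ γ := rpow_pos_of_pos hr' γ
      calc c₀ * powerWeight γ ↑(N / r) ↑(1 : ℕ)
          ≤ c₀ * (powerWeight γ N k / (r : ℝ) ^ γ) := by
            rw [Nat.cast_one]
            exact mul_le_mul_of_nonneg_left (powerWeight_nat_div_one_le hγ0 hγ1 hr hdom.1) hc₀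
        _ ≤ c * powerWeight γ N k := by
            rw [mul_div_assoc', div_le_iff₀ hrγ]
            nlinarith
  · rw [if_neg (not_lt.2 hrk), add_zero, powerTerm,
      if_pos ⟨Nat.div_pos hrk hr, Nat.div_le_div_right hdom.2⟩]
    refine hh ?_
    have hcr' : c₀ ≤ c * r := hcr.trans <| mul_le_mul_of_nonneg_left
      (rpow_le_self_of_one_le (by exact_mod_cast hr) hγ1) hc.le
    calc c₀ * powerWeight γ ↑(N / r) ↑(k / r) ≤ c₀ * (powerWeight γ N k / r) :=
          mul_le_mul_of_nonneg_left (powerWeight_nat_div_le hγ0 hγ1 hr hrk) hc₀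
      _ ≤ c * powerWeight γ N k := by
          rw [mul_div_assoc', div_le_iff₀ hr']
          nlinarith

lemma tsum_powerTerm_one_le (c : ℝ) : ∑' q, powerTerm h γ c (q, 1) ≤ powerTail h γ c :=
  ENNReal.tsum_comp_le_tsum_of_injective (fun _ _ hq => congrArg Prod.fst hq) _

lemma powerTail_ne_top_of_ne_top (hh : Antitone h) (hγ0 : 0 < γ) (hγ1 : γ ≤ 1)
    (hfin : ∀ t, 0 < t → h t ≠ ⊤) {c₀ c : ℝ} (hc₀ : 0 < c₀) (hc : 0 < c)
    (h₀ : powerTail h γ c₀ ≠ ⊤) : powerTail h γ c ≠ ⊤ := by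
  obtain ⟨r, hr, hcr⟩ : ∃ r : ℕ, 1 ≤ r ∧ c₀ / c ≤ (r : ℝ) ^ γ :=
    (((tendsto_rpow_atTop hγ0).comp tendsto_natCast_atTop_atTop).eventually_ge_atTop (c₀ / c)
      |>.and (eventually_ge_atTop 1)).exists.imp fun _ h => h.symm
  have : NeZero r := ⟨by omega⟩
  have hterm := powerTerm_le hh hγ0.le hγ1 hc₀.le hc hr
    (by rwa [div_le_iff₀' hc] at hcr)
  -- Stated curried: after `ENNReal.tsum_prod'` the decidability instances would still mention
  -- the pair, which blocks `ENNReal.tsum_ite_lt`.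
  have hboundary : ∑' N : ℕ, ∑' k : ℕ, (if k < r then powerTerm h γ c₀ (N / r, 1) +
      (if N < r then h c else 0) else 0) ≤ r * (r * powerTail h γ c₀ + r * h c) := by
    simp only [ENNReal.tsum_ite_lt, ENNReal.tsum_mul_left]
    rw [ENNReal.tsum_add, ENNReal.tsum_ite_lt, ENNReal.tsum_nat_div r (powerTerm h γ c₀ ⟨·, 1⟩)]
    gcongr
    exact tsum_powerTerm_one_le c₀
  have hsum : powerTail h γ c ≤ r * r * powerTail h γ c₀ + r * (r * powerTail h γ c₀ + r * h c) :=
    calc powerTail h γ c ≤ ∑' p : ℕ × ℕ, powerTerm h γ c₀ (p.1 / r, p.2 / r) +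
          ∑' N : ℕ, ∑' k : ℕ, (if k < r then powerTerm h γ c₀ (N / r, 1) +
            (if N < r then h c else 0) else 0) :=
          (ENNReal.tsum_le_tsum hterm).trans_eq <|
            ENNReal.tsum_add.trans (congrArg _ ENNReal.tsum_prod')
      _ ≤ _ := by
          rw [ENNReal.tsum_prod_div r]
          exact add_le_add le_rfl hboundary
  refine ne_top_of_le_ne_top ?_ hsum
  have := hfin c hc
  finiteness

lemma powerTail_powerTail (h : ℝ → ℝ≥0∞) (α β c : ℝ) :
    powerTail (powerTail h β) α c = ∑' m : ℕ, ∑' n : ℕ, ∑ k ∈ Icc 1 (m + 1), ∑ l ∈ Icc 1 (n + 1),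
      h (c * (powerWeight α ((m : ℝ) + 1) k * powerWeight β ((n : ℝ) + 1) l)) := by
  simp only [powerTail_eq, mul_assoc]
  exact tsum_congr fun m => (Summable.tsum_finsetSum fun _ _ => ENNReal.summable).symm

lemma powerTail_powerTail_ne_top_of_ne_top (hh : Antitone h) (hα0 : 0 < α) (hα1 : α ≤ 1)
    (hβ0 : 0 < β) (hβ1 : β ≤ 1) (hfin : ∀ t, 0 < t → h t ≠ ⊤) {c₀ c : ℝ} (hc₀ : 0 < c₀)
    (hc : 0 < c) (h₀ : powerTail (powerTail h β) α c₀ ≠ ⊤) :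
    powerTail (powerTail h β) α c ≠ ⊤ := by
  have hinner : powerTail h β c₀ ≠ ⊤ := ne_top_of_le_ne_top h₀ <|
    calc powerTail h β c₀ = powerTerm (powerTail h β) α c₀ (1, 1) := by simp [powerTerm]
      _ ≤ _ := ENNReal.le_tsum _
  exact powerTail_ne_top_of_ne_top (powerTail_antitone hh) hα0 hα1
    (fun t ht => powerTail_ne_top_of_ne_top hh hβ0 hβ1 hfin hc₀ ht hinner) hc₀ hc h₀

end PowerTail

lemma cesaroA_pos_s13 {γ : ℝ} (hγ : -1 < γ) (n : ℕ) : 0 < cesaroA γ n :=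
  prod_pos fun j _ => div_pos (by linarith [j.cast_nonneg (α := ℝ)]) (by positivity)

lemma cesaroA_eq_prod_div_factorial (γ : ℝ) (n : ℕ) :
    cesaroA γ n = (∏ j ∈ range n, (γ + 1 + j)) / n.factorial := by
  rw [cesaroA, Finset.prod_div_distrib, ← prod_range_add_one_eq_factorial, Nat.cast_prod]
  push_cast
  ring_nf

lemma cesaroA_div_rpow_eq {γ : ℝ} (hγ : -1 < γ) {n : ℕ} (hn : n ≠ 0) :
    cesaroA γ n / (n : ℝ) ^ γ = n / (n + (γ + 1)) * (GammaSeq (γ + 1) n)⁻¹ := by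
  have hn' : (0 : ℝ) < n := by positivity
  have : (n : ℝ) + (γ + 1) ≠ 0 := by linarith
  rw [cesaroA_eq_prod_div_factorial, GammaSeq, prod_range_succ, rpow_add_one hn'.ne']
  field_simp
  ring

lemma tendsto_cesaroA_div_rpow {γ : ℝ} (hγ : -1 < γ) :
    Tendsto (fun n : ℕ => cesaroA γ n / (n : ℝ) ^ γ) atTop (𝓝 (Gamma (γ + 1))⁻¹) := by
  have hΓ := ((GammaSeq_tendsto_Gamma (γ + 1)).inv₀ (Gamma_pos_of_pos (by linarith)).ne')
  have h := (tendsto_natCast_div_add_atTop (γ + 1)).mul hΓ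
  rw [one_mul] at h
  exact h.congr' <| (eventually_ne_atTop 0).mono fun n hn => (cesaroA_div_rpow_eq hγ hn).symm

lemma exists_pos_bounds_of_tendsto {u : ℕ → ℝ} (hu : ∀ n, 0 < u n) {L : ℝ} (hL : 0 < L)
    (h : Tendsto u atTop (𝓝 L)) : ∃ c C, 0 < c ∧ 0 < C ∧ ∀ n, c ≤ u n ∧ u n ≤ C := by
  obtain ⟨C, hC⟩ := h.bddAbove_range
  obtain ⟨D, hD⟩ := (h.inv₀ hL.ne').bddAbove_range
  have hC' : ∀ n, u n ≤ C := fun n => hC ⟨n, rfl⟩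
  have hD' : ∀ n, (u n)⁻¹ ≤ D := fun n => hD ⟨n, rfl⟩
  have hDpos : 0 < D := (inv_pos.2 (hu 0)).trans_le (hD' 0)
  exact ⟨D⁻¹, C, inv_pos.2 hDpos, (hu 0).trans_le (hC' 0), fun n =>
    ⟨(inv_le_comm₀ hDpos (hu n)).2 (hD' n), hC' n⟩⟩

lemma exists_cesaroA_bounds {γ : ℝ} (hγ : -1 < γ) : ∃ c C, 0 < c ∧ 0 < C ∧ ∀ n : ℕ,
    c * ((max n 1 : ℕ) : ℝ) ^ γ ≤ cesaroA γ n ∧ cesaroA γ n ≤ C * ((max n 1 : ℕ) : ℝ) ^ γ := by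
  have hpos : ∀ n : ℕ, 0 < ((max n 1 : ℕ) : ℝ) ^ γ := fun n =>
    rpow_pos_of_pos (by exact_mod_cast (le_max_right n 1)) γ
  have hlim : Tendsto (fun n : ℕ => cesaroA γ n / ((max n 1 : ℕ) : ℝ) ^ γ) atTop
      (𝓝 (Gamma (γ + 1))⁻¹) :=
    (tendsto_cesaroA_div_rpow hγ).congr' <| (eventually_ge_atTop 1).mono fun n hn => by
      simp only [max_eq_left hn]
  obtain ⟨c, C, hc, hC, hb⟩ := exists_pos_bounds_of_tendsto
    (fun n => div_pos (cesaroA_pos_s13 hγ n) (hpos n)) (inv_pos.2 (Gamma_pos_of_pos (by linarith)))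
    hlim
  refine ⟨c, C, hc, hC, fun n => ?_⟩
  rw [← le_div_iff₀ (hpos n), ← div_le_iff₀ (hpos n)]
  exact hb n

noncomputable def cesaroRatio (γ : ℝ) (N k : ℕ) : ℝ := cesaroA γ N / cesaroA (γ - 1) k

lemma cesaroRatio_pos {γ : ℝ} (hγ : 0 < γ) (N k : ℕ) : 0 < cesaroRatio γ N k :=
  div_pos (cesaroA_pos_s13 (by linarith) N) (cesaroA_pos_s13 (by linarith) k)

lemma exists_cesaroRatio_bounds {γ : ℝ} (hγ : 0 < γ) : ∃ ρ σ, 0 < ρ ∧ 0 < σ ∧ ∀ N k : ℕ,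
    ρ * powerWeight γ ((N : ℝ) + 1) (max k 1 : ℕ) ≤ cesaroRatio γ (N + 1) k ∧
      cesaroRatio γ (N + 1) k ≤ σ * powerWeight γ ((N : ℝ) + 1) (max k 1 : ℕ) := by
  obtain ⟨c₁, C₁, hc₁, hC₁, hA⟩ := exists_cesaroA_bounds (γ := γ) (by linarith)
  obtain ⟨c₂, C₂, hc₂, hC₂, hB⟩ := exists_cesaroA_bounds (γ := γ - 1) (by linarith)
  refine ⟨c₁ / C₂, C₁ / c₂, div_pos hc₁ hC₂, div_pos hC₁ hc₂, fun N k => ?_⟩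
  have hN : ((max (N + 1) 1 : ℕ) : ℝ) = N + 1 := by simp
  have hK : 0 < ((max k 1 : ℕ) : ℝ) ^ (γ - 1) :=
    rpow_pos_of_pos (by exact_mod_cast (le_max_right k 1)) _
  obtain ⟨hA₁, hA₂⟩ := hA (N + 1)
  obtain ⟨hB₁, hB₂⟩ := hB k
  rw [hN] at hA₁ hA₂
  have hx : 0 < ((N : ℝ) + 1) ^ γ := by positivity
  rw [cesaroRatio, powerWeight]
  constructor
  · calc c₁ / C₂ * (((N : ℝ) + 1) ^ γ / ((max k 1 : ℕ) : ℝ) ^ (γ - 1))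
        = c₁ * ((N : ℝ) + 1) ^ γ / (C₂ * ((max k 1 : ℕ) : ℝ) ^ (γ - 1)) := div_mul_div_comm ..
      _ ≤ _ := div_le_div₀ (cesaroA_pos_s13 (by linarith) _).le hA₁ (cesaroA_pos_s13 (by linarith) _) hB₂
  · calc cesaroA γ (N + 1) / cesaroA (γ - 1) k
        ≤ C₁ * ((N : ℝ) + 1) ^ γ / (c₂ * ((max k 1 : ℕ) : ℝ) ^ (γ - 1)) :=
          div_le_div₀ (mul_pos hC₁ hx).le hA₂ (mul_pos hc₂ hK) hB₁
      _ = _ := (div_mul_div_comm ..).symm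

lemma sum_range_max_one_le (u : ℕ → ℝ≥0∞) (n : ℕ) :
    ∑ l ∈ range (n + 2), u (max l 1) ≤ 2 * ∑ l ∈ Icc 1 (n + 1), u l := by
  rw [sum_range_eq_add_Ico _ (by omega), ← Ico_add_one_right_eq_Icc, two_mul]
  rw [sum_congr rfl fun l hl => by rw [max_eq_left (mem_Ico.1 hl).1]]
  exact add_le_add_left (single_le_sum (fun _ _ => zero_le) (by simp)) _

lemma sum_range_sum_range_max_one_le (u : ℕ → ℕ → ℝ≥0∞) (m n : ℕ) :
    ∑ k ∈ range (m + 2), ∑ l ∈ range (n + 2), u (max k 1) (max l 1) ≤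
      4 * ∑ k ∈ Icc 1 (m + 1), ∑ l ∈ Icc 1 (n + 1), u k l :=
  calc ∑ k ∈ range (m + 2), ∑ l ∈ range (n + 2), u (max k 1) (max l 1)
      ≤ 2 * ∑ k ∈ range (m + 2), ∑ l ∈ Icc 1 (n + 1), u (max k 1) l := by
        rw [mul_sum]
        exact sum_le_sum fun k _ => sum_range_max_one_le (u (max k 1)) n
    _ ≤ 2 * (2 * ∑ k ∈ Icc 1 (m + 1), ∑ l ∈ Icc 1 (n + 1), u k l) := by
        gcongr
        exact sum_range_max_one_le (fun k => ∑ l ∈ Icc 1 (n + 1), u k l) m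
    _ = 4 * ∑ k ∈ Icc 1 (m + 1), ∑ l ∈ Icc 1 (n + 1), u k l := by ring

noncomputable def cesaroTail (h : ℝ → ℝ≥0∞) (α β : ℝ) : ℝ≥0∞ :=
  ∑' m : ℕ, ∑' n : ℕ, ∑ k ∈ range (m + 2), ∑ l ∈ range (n + 2),
    h (cesaroRatio α (m + 1) k * cesaroRatio β (n + 1) l)

section CesaroTail

variable {h : ℝ → ℝ≥0∞} {α β : ℝ}

lemma powerTail_powerTail_le_cesaroTail (hh : Antitone h) (hα : 0 < α) (hβ : 0 < β)
    {σ₁ σ₂ : ℝ} (h₁ : ∀ N k : ℕ, cesaroRatio α (N + 1) k ≤ σ₁ * powerWeight α (N + 1) (max k 1 : ℕ))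
    (h₂ : ∀ N k : ℕ, cesaroRatio β (N + 1) k ≤ σ₂ * powerWeight β (N + 1) (max k 1 : ℕ)) :
    powerTail (powerTail h β) α (σ₁ * σ₂) ≤ cesaroTail h α β := by
  rw [powerTail_powerTail]
  refine ENNReal.tsum_le_tsum fun m => ENNReal.tsum_le_tsum fun n => ?_
  have hIcc : ∀ N, Icc 1 (N + 1) ⊆ range (N + 2) := fun N k hk => by
    simp only [mem_Icc, mem_range] at hk ⊢; omega
  refine (sum_le_sum fun k hk => sum_le_sum fun l hl => hh ?_).trans
    (sum_le_sum_of_subset (hIcc m) |>.trans' (sum_le_sum fun k _ => sum_le_sum_of_subset (hIcc n)))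
  have hk : max k 1 = k := max_eq_left (mem_Icc.1 hk).1
  have hl : max l 1 = l := max_eq_left (mem_Icc.1 hl).1
  have hR₁ := h₁ m k
  have hR₂ := h₂ n l
  rw [hk] at hR₁
  rw [hl] at hR₂
  calc cesaroRatio α (m + 1) k * cesaroRatio β (n + 1) l
      ≤ (σ₁ * powerWeight α (m + 1) k) * (σ₂ * powerWeight β (n + 1) l) :=
        mul_le_mul hR₁ hR₂ (cesaroRatio_pos hβ _ _).le ((cesaroRatio_pos hα _ _).le.trans hR₁)
    _ = _ := by ring

lemma cesaroTail_le (hh : Antitone h) (hα : 0 < α) {ρ₁ ρ₂ : ℝ} (hρ₂ : 0 ≤ ρ₂)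
    (h₁ : ∀ N k : ℕ, ρ₁ * powerWeight α (N + 1) (max k 1 : ℕ) ≤ cesaroRatio α (N + 1) k)
    (h₂ : ∀ N k : ℕ, ρ₂ * powerWeight β (N + 1) (max k 1 : ℕ) ≤ cesaroRatio β (N + 1) k) :
    cesaroTail h α β ≤ 4 * powerTail (powerTail h β) α (ρ₁ * ρ₂) := by
  rw [powerTail_powerTail, ← ENNReal.tsum_mul_left]
  refine ENNReal.tsum_le_tsum fun m => ?_
  rw [← ENNReal.tsum_mul_left]
  refine ENNReal.tsum_le_tsum fun n => ?_
  calc ∑ k ∈ range (m + 2), ∑ l ∈ range (n + 2),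
        h (cesaroRatio α (m + 1) k * cesaroRatio β (n + 1) l)
      ≤ ∑ k ∈ range (m + 2), ∑ l ∈ range (n + 2), h (ρ₁ * ρ₂ *
          (powerWeight α (m + 1) (max k 1 : ℕ) * powerWeight β (n + 1) (max l 1 : ℕ))) := by
        refine sum_le_sum fun k _ => sum_le_sum fun l _ => hh ?_
        rw [mul_mul_mul_comm]
        exact mul_le_mul (h₁ m k) (h₂ n l) (mul_nonneg hρ₂ (powerWeight_nonneg (by positivity)
          (Nat.cast_nonneg _))) (cesaroRatio_pos hα _ _).le
    _ ≤ _ := sum_range_sum_range_max_one_le (fun k l => h (ρ₁ * ρ₂ *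
          (powerWeight α (m + 1) k * powerWeight β (n + 1) l))) m n

end CesaroTail

lemma setOf_lt_mul_eq {Ω : Type*} (g : Ω → ℝ) {a b : ℝ} (hb : 0 < b) :
    {ω | a < b * g ω} = {ω | a / b < g ω} := by
  ext ω
  simp [div_lt_iff₀' hb]

section Measure

variable {Ω : Type*} [MeasurableSpace Ω] (μ : Measure Ω) (X : Ω → ℝ) {α β : ℝ}

lemma tsum_measure_cesaro_eq_cesaroTail (hα : 0 < α) (hβ : 0 < β) :
    ∑' m : ℕ, ∑' n : ℕ, ∑ k ∈ range (m + 2), ∑ l ∈ range (n + 2),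
      μ {ω | cesaroA α (m + 1) * cesaroA β (n + 1) <
        cesaroA (α - 1) (m + 1 - k) * cesaroA (β - 1) (n + 1 - l) * |X ω|} =
    cesaroTail (fun t => μ {ω | t < |X ω|}) α β := by
  refine tsum_congr fun m => tsum_congr fun n => ?_
  rw [← sum_range_reflect _ (m + 2)]
  refine sum_congr rfl fun k hk => ?_
  rw [← sum_range_reflect _ (n + 2)]
  refine sum_congr rfl fun l hl => ?_
  rw [mem_range] at hk hl
  rw [show m + 1 - (m + 2 - 1 - k) = k by omega, show n + 1 - (n + 2 - 1 - l) = l by omega,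
    setOf_lt_mul_eq (|X ·|) (mul_pos (cesaroA_pos_s13 (by linarith) k) (cesaroA_pos_s13 (by linarith) l)),
    cesaroRatio, cesaroRatio, div_mul_div_comm]

lemma tsum_measure_power_eq_powerTail :
    ∑' m : ℕ, ∑' n : ℕ, ∑ k ∈ Icc 1 (m + 1), ∑ l ∈ Icc 1 (n + 1),
      μ {ω | ((m : ℝ) + 1) ^ α * ((n : ℝ) + 1) ^ β <
        (k : ℝ) ^ (α - 1) * (l : ℝ) ^ (β - 1) * |X ω|} =
    powerTail (powerTail (fun t => μ {ω | t < |X ω|}) β) α 1 := by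
  rw [powerTail_powerTail]
  refine tsum_congr fun m => tsum_congr fun n => sum_congr rfl fun k hk => sum_congr rfl
    fun l hl => ?_
  have hk : (0 : ℝ) < k := by exact_mod_cast (mem_Icc.1 hk).1
  have hl : (0 : ℝ) < l := by exact_mod_cast (mem_Icc.1 hl).1
  rw [setOf_lt_mul_eq (|X ·|) (by positivity), one_mul, powerWeight, powerWeight,
    div_mul_div_comm]

end Measure

theorem cesaro_tail_series_iff_power_tail_series_general
    {Ω : Type*} [MeasureSpace Ω] [IsProbabilityMeasure (ℙ : Measure Ω)]
    (α β : ℝ) (hα0 : 0 < α) (hαβ : α ≤ β) (hβ1 : β ≤ 1)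
    (X : Ω → ℝ) :
    (∑' m : ℕ, ∑' n : ℕ,
        ∑ k ∈ Finset.range (m + 2), ∑ l ∈ Finset.range (n + 2),
          ℙ {ω | cesaroA α (m + 1) * cesaroA β (n + 1) <
            cesaroA (α - 1) (m + 1 - k) * cesaroA (β - 1) (n + 1 - l) * |X ω|} < ⊤)
    ↔ (∑' m : ℕ, ∑' n : ℕ,
        ∑ k ∈ Finset.Icc 1 (m + 1), ∑ l ∈ Finset.Icc 1 (n + 1),
          ℙ {ω | ((m : ℝ) + 1) ^ α * ((n : ℝ) + 1) ^ β <
            (k : ℝ) ^ (α - 1) * (l : ℝ) ^ (β - 1) * |X ω|} < ⊤) := by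
  have hβ0 : 0 < β := hα0.trans_le hαβ
  have hα1 : α ≤ 1 := hαβ.trans hβ1
  set f : ℝ → ℝ≥0∞ := fun t => ℙ {ω | t < |X ω|}
  have hf : Antitone f := fun s t hst => measure_mono fun ω hω => hst.trans_lt hω
  have hfin : ∀ t, 0 < t → f t ≠ ⊤ := fun t _ => measure_ne_top ℙ _
  obtain ⟨ρ₁, σ₁, hρ₁, hσ₁, hR₁⟩ := exists_cesaroRatio_bounds hα0
  obtain ⟨ρ₂, σ₂, hρ₂, hσ₂, hR₂⟩ := exists_cesaroRatio_bounds hβ0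
  rw [tsum_measure_cesaro_eq_cesaroTail _ _ hα0 hβ0, tsum_measure_power_eq_powerTail,
    lt_top_iff_ne_top, lt_top_iff_ne_top]
  constructor
  · intro h
    refine powerTail_powerTail_ne_top_of_ne_top hf hα0 hα1 hβ0 hβ1 hfin (mul_pos hσ₁ hσ₂) one_pos
      (ne_top_of_le_ne_top h ?_)
    exact powerTail_powerTail_le_cesaroTail hf hα0 hβ0 (fun N k => (hR₁ N k).2)
      (fun N k => (hR₂ N k).2)
  · intro h
    have := powerTail_powerTail_ne_top_of_ne_top hf hα0 hα1 hβ0 hβ1 hfin one_pos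
      (mul_pos hρ₁ hρ₂) h
    refine ne_top_of_le_ne_top (mul_ne_top (by norm_num : (4 : ℝ≥0∞) ≠ ⊤) this) ?_
    exact cesaroTail_le hf hα0 hρ₂.le (fun N k => (hR₁ N k).1) (fun N k => (hR₂ N k).1)

theorem cesaro_tail_series_iff_power_tail_series
    {Ω : Type*} [MeasureSpace Ω] [IsProbabilityMeasure (ℙ : Measure Ω)]
    (α β : ℝ) (hα0 : 0 < α) (hαβ : α ≤ β) (hβ1 : β ≤ 1)
    (X : Ω → ℝ) (hmeas : Measurable X) :
    (∑' m : ℕ, ∑' n : ℕ,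
        ∑ k ∈ Finset.range (m + 2), ∑ l ∈ Finset.range (n + 2),
          ℙ {ω | cesaroA α (m + 1) * cesaroA β (n + 1) <
            cesaroA (α - 1) (m + 1 - k) * cesaroA (β - 1) (n + 1 - l) * |X ω|} < ⊤)
    ↔ (∑' m : ℕ, ∑' n : ℕ,
        ∑ k ∈ Finset.Icc 1 (m + 1), ∑ l ∈ Finset.Icc 1 (n + 1),
          ℙ {ω | ((m : ℝ) + 1) ^ α * ((n : ℝ) + 1) ^ β <
            (k : ℝ) ^ (α - 1) * (l : ℝ) ^ (β - 1) * |X ω|} < ⊤) :=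
  cesaro_tail_series_iff_power_tail_series_general α β hα0 hαβ hβ1 X
end

section
/- Let 0 < α ≤ β ≤ 1 and let X be a real random variable with n P(|X| > n) → 0 as n → ∞. Then Σ_{k=1}^m Σ_{l=1}^n P(k^{α-1} l^{β-1} |X| > m^α n^β) → 0 as m, n → ∞ (i.e., as min(m,n) → ∞). -/
/-!
Put `D = m^α n^β` and `c = k^(α-1) l^(β-1) ∈ (0, 1]`. Then
`P(c|X| > D) = (c / D) · g(D / c)` with `g(t) = t P(|X| > t)`, and `D / c ≥ D`, so every term is at
most `(c / D) · sup_{t ≥ D} g(t)`. Concavity of `x ↦ x^a` gives `∑_{k ≤ m} k^(a-1) ≤ m^a / a`, hence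
the double sum of the weights `c` is at most `D / (αβ)` and the whole sum is at most
`sup_{t ≥ D} g(t) / (αβ)`, which tends to `0` because `g(n) → 0` along the integers and the tail
`t ↦ P(|X| > t)` is antitone.
-/

open MeasureTheory ProbabilityTheory Filter Finset Topology

lemma rpow_add_mul_rpow_sub_one_le {a x : ℝ} (ha0 : 0 ≤ a) (ha1 : a ≤ 1) (hx : 0 ≤ x) :
    x ^ a + a * (x + 1) ^ (a - 1) ≤ (x + 1) ^ a := by
  have hy : 0 < x + 1 := by linarith
  have hs : -1 ≤ -(x + 1)⁻¹ := neg_le_neg (inv_le_one_of_one_le₀ (by linarith))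
  have bernoulli := rpow_one_add_le_one_add_mul_self hs ha0 ha1
  have hxy : 1 + -(x + 1)⁻¹ = x / (x + 1) := by field_simp; ring
  rw [hxy, Real.div_rpow hx hy.le, div_le_iff₀ (Real.rpow_pos_of_pos hy a)] at bernoulli
  rw [Real.rpow_sub_one hy.ne']
  calc x ^ a + a * ((x + 1) ^ a / (x + 1))
      ≤ (1 + a * -(x + 1)⁻¹) * (x + 1) ^ a + a * ((x + 1) ^ a / (x + 1)) := by gcongr
    _ = (x + 1) ^ a := by ring

lemma sum_Icc_rpow_sub_one_le {a : ℝ} (ha0 : 0 < a) (ha1 : a ≤ 1) (m : ℕ) :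
    ∑ k ∈ Icc 1 m, (k : ℝ) ^ (a - 1) ≤ (m : ℝ) ^ a / a := by
  induction m with
  | zero => simp [Real.zero_rpow ha0.ne']
  | succ m ih =>
    rw [sum_Icc_succ_top (Nat.le_add_left 1 m), le_div_iff₀ ha0, add_mul]
    push_cast
    rw [le_div_iff₀ ha0] at ih
    linarith [rpow_add_mul_rpow_sub_one_le ha0.le ha1 m.cast_nonneg]

lemma Antitone.tendsto_mul_of_tendsto_natCast {f : ℝ → ℝ} (hf : Antitone f) (hf0 : 0 ≤ f)
    (h : Tendsto (fun n : ℕ => (n : ℝ) * f n) atTop (𝓝 0)) :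
    Tendsto (fun t => t * f t) atTop (𝓝 0) := by
  have upper : Tendsto (fun t : ℝ => 2 * (⌊t⌋₊ * f ⌊t⌋₊)) atTop (𝓝 0) := by
    simpa using (h.comp tendsto_nat_floor_atTop).const_mul 2
  refine tendsto_of_tendsto_of_tendsto_of_le_of_le' tendsto_const_nhds upper ?_ ?_
  · filter_upwards [eventually_ge_atTop 0] with t ht using mul_nonneg ht (hf0 t)
  · filter_upwards [eventually_ge_atTop 1] with t ht
    have hfloor : t ≤ 2 * ⌊t⌋₊ := by
      have hlt := Nat.lt_floor_add_one t
      have hone : (1 : ℝ) ≤ ⌊t⌋₊ := by exact_mod_cast Nat.one_le_floor_iff t |>.mpr ht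
      linarith
    calc t * f t ≤ (2 * ⌊t⌋₊) * f ⌊t⌋₊ :=
          mul_le_mul hfloor (hf (Nat.floor_le (by linarith))) (hf0 t) (by positivity)
      _ = 2 * (⌊t⌋₊ * f ⌊t⌋₊) := by ring

lemma tendsto_rpow_mul_rpow_atTop {α β : ℝ} (hα : 0 < α) (hβ : 0 < β) :
    Tendsto (fun mn : ℕ × ℕ => (mn.1 : ℝ) ^ α * (mn.2 : ℝ) ^ β) atTop atTop := by
  rw [← prod_atTop_atTop_eq]
  exact Tendsto.atTop_mul_atTop₀
    ((tendsto_rpow_atTop hα).comp (tendsto_natCast_atTop_atTop.comp tendsto_fst))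
    ((tendsto_rpow_atTop hβ).comp (tendsto_natCast_atTop_atTop.comp tendsto_snd))

lemma antitone_measure_lt_toReal {Ω : Type*} [MeasurableSpace Ω] (μ : Measure Ω)
    [IsFiniteMeasure μ] (Y : Ω → ℝ) :
    Antitone fun t : ℝ => (μ {ω | t < Y ω}).toReal :=
  fun _ _ hst => ENNReal.toReal_mono (measure_ne_top _ _)
    (measure_mono fun _ hω => lt_of_le_of_lt hst hω)

section

variable {Ω : Type*} [MeasurableSpace Ω] {μ : Measure Ω} {X : Ω → ℝ} {ε D : ℝ}

lemma measure_lt_mul_abs_toReal_le {c : ℝ} (hc0 : 0 < c) (hc1 : c ≤ 1) (hD : 0 < D)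
    (hε : ∀ t ≥ D, t * (μ {ω | t < |X ω|}).toReal ≤ ε) :
    (μ {ω | D < c * |X ω|}).toReal ≤ ε / D * c := by
  have hset : {ω | D < c * |X ω|} = {ω | D / c < |X ω|} := by
    ext ω
    simp only [Set.mem_ofPred_eq, div_lt_iff₀ hc0, mul_comm c]
  rw [hset]
  calc _ = D / c * (μ {ω | D / c < |X ω|}).toReal * c / D := by field_simp
    _ ≤ ε * c / D := by gcongr; exact hε _ (le_div_self hD.le hc0 hc1)
    _ = ε / D * c := by ring

lemma sum_sum_measure_lt_rpow_mul_abs_toReal_le {α β : ℝ} (hα0 : 0 < α) (hα1 : α ≤ 1)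
    (hβ0 : 0 < β) (hβ1 : β ≤ 1) {m n : ℕ} (hD : 0 < (m : ℝ) ^ α * (n : ℝ) ^ β)
    (hε : ∀ t ≥ (m : ℝ) ^ α * (n : ℝ) ^ β, t * (μ {ω | t < |X ω|}).toReal ≤ ε) :
    ∑ k ∈ Icc 1 m, ∑ l ∈ Icc 1 n,
        (μ {ω | (m : ℝ) ^ α * (n : ℝ) ^ β <
          (k : ℝ) ^ (α - 1) * (l : ℝ) ^ (β - 1) * |X ω|}).toReal ≤ ε / (α * β) := by
  set D := (m : ℝ) ^ α * (n : ℝ) ^ β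
  have hε0 : 0 ≤ ε := (mul_nonneg hD.le ENNReal.toReal_nonneg).trans (hε D le_rfl)
  have hterm : ∀ k ∈ Icc 1 m, ∀ l ∈ Icc 1 n,
      (μ {ω | D < (k : ℝ) ^ (α - 1) * (l : ℝ) ^ (β - 1) * |X ω|}).toReal
        ≤ ε / D * ((k : ℝ) ^ (α - 1) * (l : ℝ) ^ (β - 1)) := by
    intro k hk l hl
    have hk : (1 : ℝ) ≤ k := by exact_mod_cast (mem_Icc.1 hk).1
    have hl : (1 : ℝ) ≤ l := by exact_mod_cast (mem_Icc.1 hl).1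
    refine measure_lt_mul_abs_toReal_le (by positivity) ?_ hD hε
    exact mul_le_one₀ (Real.rpow_le_one_of_one_le_of_nonpos hk (by linarith)) (by positivity)
      (Real.rpow_le_one_of_one_le_of_nonpos hl (by linarith))
  calc _ ≤ ∑ k ∈ Icc 1 m, ∑ l ∈ Icc 1 n, ε / D * ((k : ℝ) ^ (α - 1) * (l : ℝ) ^ (β - 1)) :=
        sum_le_sum fun k hk => sum_le_sum fun l hl => hterm k hk l hl
    _ = ε / D * ((∑ k ∈ Icc 1 m, (k : ℝ) ^ (α - 1)) * ∑ l ∈ Icc 1 n, (l : ℝ) ^ (β - 1)) := by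
        rw [sum_mul_sum, mul_sum]
        simp only [mul_sum]
    _ ≤ ε / D * ((m : ℝ) ^ α / α * ((n : ℝ) ^ β / β)) := by
        gcongr
        · exact sum_Icc_rpow_sub_one_le hα0 hα1 m
        · exact sum_Icc_rpow_sub_one_le hβ0 hβ1 n
    _ = ε / (α * β) := by
        rw [div_mul_div_comm, ← mul_div_assoc, div_mul_cancel₀ _ hD.ne']

end

theorem tail_sum_tendsto_zero_of_weak_condition_general
    {Ω : Type*} [MeasureSpace Ω] [IsProbabilityMeasure (ℙ : Measure Ω)]
    (α β : ℝ) (hα0 : 0 < α) (hαβ : α ≤ β) (hβ1 : β ≤ 1)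
    (X : Ω → ℝ)
    (hweak : Tendsto (fun n : ℕ => (n : ℝ) * (ℙ {ω | (n : ℝ) < |X ω|}).toReal)
      atTop (𝓝 0)) :
    Tendsto (fun mn : ℕ × ℕ =>
        ∑ k ∈ Finset.Icc 1 mn.1, ∑ l ∈ Finset.Icc 1 mn.2,
          (ℙ {ω | (mn.1 : ℝ) ^ α * (mn.2 : ℝ) ^ β <
            (k : ℝ) ^ (α - 1) * (l : ℝ) ^ (β - 1) * |X ω|}).toReal)
      atTop (𝓝 0) := by
  have hβ0 : 0 < β := hα0.trans_le hαβ
  have htail := (antitone_measure_lt_toReal ℙ fun ω => |X ω|).tendsto_mul_of_tendsto_natCast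
    (fun _ => ENNReal.toReal_nonneg) hweak
  refine tendsto_order.2 ⟨fun a ha => Eventually.of_forall fun mn =>
    ha.trans_le (sum_nonneg fun _ _ => sum_nonneg fun _ _ => ENNReal.toReal_nonneg), ?_⟩
  intro ε hε
  obtain ⟨T, hT⟩ := eventually_atTop.1 <|
    (htail.eventually (ge_mem_nhds (by positivity : 0 < ε * (α * β) / 2))).and
      (eventually_gt_atTop 0)
  filter_upwards [(tendsto_rpow_mul_rpow_atTop hα0 hβ0).eventually_ge_atTop T] with mn hmn
  calc _ ≤ ε * (α * β) / 2 / (α * β) :=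
        sum_sum_measure_lt_rpow_mul_abs_toReal_le hα0 (hαβ.trans hβ1) hβ0 hβ1
          (hT _ hmn).2 fun t ht => (hT t (hmn.trans ht)).1
    _ = ε / 2 := by field_simp
    _ < ε := half_lt_self hε

theorem tail_sum_tendsto_zero_of_weak_condition
    {Ω : Type*} [MeasureSpace Ω] [IsProbabilityMeasure (ℙ : Measure Ω)]
    (α β : ℝ) (hα0 : 0 < α) (hαβ : α ≤ β) (hβ1 : β ≤ 1)
    (X : Ω → ℝ) (hmeas : Measurable X)
    (hweak : Tendsto (fun n : ℕ => (n : ℝ) * (ℙ {ω | (n : ℝ) < |X ω|}).toReal)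
      atTop (𝓝 0)) :
    Tendsto (fun mn : ℕ × ℕ =>
        ∑ k ∈ Finset.Icc 1 mn.1, ∑ l ∈ Finset.Icc 1 mn.2,
          (ℙ {ω | (mn.1 : ℝ) ^ α * (mn.2 : ℝ) ^ β <
            (k : ℝ) ^ (α - 1) * (l : ℝ) ^ (β - 1) * |X ω|}).toReal)
      atTop (𝓝 0) :=
  tail_sum_tendsto_zero_of_weak_condition_general α β hα0 hαβ hβ1 X hweak
end

section
/- Let 0 < α ≤ β ≤ 1 and let X be a real random variable. Then Σ_{m,n ≥ 1} P(|X| > m^α n^β) < ∞ if and only if E|X|^{1/α} < ∞ when α < β, respectively E|X|^{1/α} log^+|X| < ∞ when α = β. -/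
/-!
With `Z = |X| ^ (1 / α)` and `γ = β / α ≥ 1`, the event `(m+1)^α (n+1)^β < |X|` reads
`(m+1) (n+1)^γ < Z`, so by Tonelli the series is `E[N_γ(Z)]`, where `N_γ(z)` counts the lattice
points `(m, n)` of positive integers with `m n^γ < z`. Summing over `m` first, column `n` holds
about `z / n^γ` points. For `γ > 1` these columns have a convergent sum, so `N_γ(z) ≍ z`; for
`γ = 1`, `N_1(z) ≍ z H_{⌊z⌋} ≍ z log⁺ z`. Finally `log⁺ Z ≍ log⁺ |X|` because `1 / α ≥ 1`.
-/

open MeasureTheory ProbabilityTheory Filter Finset Topology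

/-- `logPlus x = max (log x) 1`. -/
noncomputable def logPlus (x : ℝ) : ℝ := max (Real.log x) 1

open scoped ENNReal

lemma one_le_logPlus (x : ℝ) : 1 ≤ logPlus x := le_max_right _ _

lemma logPlus_nonneg (x : ℝ) : 0 ≤ logPlus x := zero_le_one.trans (one_le_logPlus x)

@[fun_prop]
lemma measurable_logPlus : Measurable logPlus := Real.measurable_log.max measurable_const

lemma Real.log_rpow_of_nonneg {x : ℝ} (hx : 0 ≤ x) {p : ℝ} (hp : 0 < p) :
    Real.log (x ^ p) = p * Real.log x := by
  rcases hx.eq_or_lt with rfl | hx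
  · simp [Real.zero_rpow hp.ne']
  · exact Real.log_rpow hx p

lemma logPlus_le_logPlus_rpow {p x : ℝ} (hp : 1 ≤ p) (hx : 0 ≤ x) :
    logPlus x ≤ logPlus (x ^ p) := by
  rw [logPlus, logPlus, Real.log_rpow_of_nonneg hx (by linarith)]
  refine max_le ?_ (le_max_right _ _)
  rcases le_total 0 (Real.log x) with h | h
  · exact le_max_of_le_left (le_mul_of_one_le_left h hp)
  · exact le_max_of_le_right (h.trans zero_le_one)

lemma logPlus_rpow_le {p x : ℝ} (hp : 1 ≤ p) (hx : 0 ≤ x) :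
    logPlus (x ^ p) ≤ p * logPlus x := by
  rw [logPlus, logPlus, Real.log_rpow_of_nonneg hx (by linarith)]
  have := le_max_left (Real.log x) 1
  have := le_max_right (Real.log x) 1
  exact max_le (by gcongr) (by nlinarith)

lemma ofReal_le_natCeil (s : ℝ) : ENNReal.ofReal s ≤ ⌈s⌉₊ := by
  rw [← ENNReal.ofReal_natCast]
  exact ENNReal.ofReal_le_ofReal (Nat.le_ceil s)

lemma natCeil_sub_one_le_ofReal (s : ℝ) : (⌈s - 1⌉₊ : ℝ≥0∞) ≤ ENNReal.ofReal s := by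
  rcases le_or_gt s 1 with h | h
  · simp [Nat.ceil_eq_zero.mpr (sub_nonpos.mpr h)]
  · rw [← ENNReal.ofReal_natCast]
    refine ENNReal.ofReal_le_ofReal ?_
    linarith [Nat.ceil_lt_add_one (sub_nonneg.mpr h.le)]

lemma tsum_ite_add_one_mul_lt {c : ℝ} (hc : 0 < c) (z : ℝ) :
    ∑' m : ℕ, (if ((m : ℝ) + 1) * c < z then 1 else 0 : ℝ≥0∞) = ⌈z / c - 1⌉₊ := by
  have h : ∀ m : ℕ, ((m : ℝ) + 1) * c < z ↔ m ∈ range ⌈z / c - 1⌉₊ := fun m => by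
    rw [mem_range, Nat.lt_ceil, lt_sub_iff_add_lt, lt_div_iff₀ hc]
  simp_rw [h]
  rw [tsum_eq_sum (s := range ⌈z / c - 1⌉₊) (fun m hm => if_neg hm), sum_ite_mem]
  simp

/-- The indices are shifted by one: this counts the pairs of positive integers `(m, n)` with
`m * n ^ γ < z`. -/
noncomputable def latticeCount (γ z : ℝ) : ℝ≥0∞ :=
  ∑' m : ℕ, ∑' n : ℕ, if ((m : ℝ) + 1) * ((n : ℝ) + 1) ^ γ < z then 1 else 0

lemma latticeCount_eq_tsum_natCeil (γ z : ℝ) :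
    latticeCount γ z = ∑' n : ℕ, (⌈z / ((n : ℝ) + 1) ^ γ - 1⌉₊ : ℝ≥0∞) := by
  rw [latticeCount, ENNReal.tsum_comm]
  exact tsum_congr fun n => tsum_ite_add_one_mul_lt (by positivity) z

lemma ofReal_le_latticeCount_add_one (γ z : ℝ) : ENNReal.ofReal z ≤ latticeCount γ z + 1 := by
  have hcol : ENNReal.ofReal (z - 1) ≤ latticeCount γ z := by
    rw [latticeCount_eq_tsum_natCeil]
    refine le_trans ?_ (ENNReal.le_tsum 0)
    simpa using ofReal_le_natCeil (z - 1)
  calc ENNReal.ofReal z ≤ ENNReal.ofReal (z - 1) + ENNReal.ofReal 1 := by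
        simpa using ENNReal.ofReal_add_le (p := z - 1) (q := 1)
    _ ≤ latticeCount γ z + 1 := by rw [ENNReal.ofReal_one]; gcongr

lemma latticeCount_le_ofReal_mul_tsum (γ : ℝ) {z : ℝ} (hz : 0 ≤ z) :
    latticeCount γ z ≤ ENNReal.ofReal z * ∑' n : ℕ, ENNReal.ofReal (((n : ℝ) + 1) ^ γ)⁻¹ := by
  rw [latticeCount_eq_tsum_natCeil, ← ENNReal.tsum_mul_left]
  refine ENNReal.tsum_le_tsum fun n => (natCeil_sub_one_le_ofReal _).trans_eq ?_
  rw [← ENNReal.ofReal_mul hz, div_eq_mul_inv]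

lemma tsum_ofReal_inv_add_one_rpow_ne_top {γ : ℝ} (hγ : 1 < γ) :
    ∑' n : ℕ, ENNReal.ofReal (((n : ℝ) + 1) ^ γ)⁻¹ ≠ ∞ := by
  have hs : Summable fun n : ℕ => (((n : ℝ) + 1) ^ γ)⁻¹ := by
    have := (Real.summable_one_div_nat_add_rpow 1 γ).mpr hγ
    refine this.congr fun n => ?_
    rw [one_div, abs_of_nonneg (by positivity)]
  rw [← ENNReal.ofReal_tsum_of_nonneg (fun n => by positivity) hs]
  exact ENNReal.ofReal_ne_top

lemma harmonic_eq_sum_inv (K : ℕ) : (harmonic K : ℝ) = ∑ n ∈ range K, ((n : ℝ) + 1)⁻¹ := by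
  simp [harmonic]

lemma latticeCount_one_eq_sum (z : ℝ) :
    latticeCount 1 z = ∑ n ∈ range ⌊z⌋₊, (⌈z / ((n : ℝ) + 1) - 1⌉₊ : ℝ≥0∞) := by
  simp_rw [latticeCount_eq_tsum_natCeil, Real.rpow_one]
  refine tsum_eq_sum fun n hn => ?_
  have hzn : z < n + 1 := (Nat.lt_floor_add_one z).trans_le (by simpa using hn)
  rw [Nat.cast_eq_zero, Nat.ceil_eq_zero, sub_nonpos, div_le_one (by positivity)]
  exact hzn.le

lemma latticeCount_one_le_ofReal_mul_harmonic {z : ℝ} (hz : 0 ≤ z) :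
    latticeCount 1 z ≤ ENNReal.ofReal (z * harmonic ⌊z⌋₊) := by
  rw [latticeCount_one_eq_sum, harmonic_eq_sum_inv, mul_sum,
    ENNReal.ofReal_sum_of_nonneg fun n _ => by positivity]
  exact sum_le_sum fun n _ => natCeil_sub_one_le_ofReal _

lemma ofReal_mul_harmonic_sub_le_latticeCount_one (z : ℝ) :
    ENNReal.ofReal (z * harmonic ⌊z⌋₊ - ⌊z⌋₊) ≤ latticeCount 1 z := by
  have hterm : ∀ n ∈ range ⌊z⌋₊, 0 ≤ z / ((n : ℝ) + 1) - 1 := fun n hn => by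
    have hnz : n < ⌊z⌋₊ := mem_range.mp hn
    have hn1 : (n : ℝ) + 1 ≤ ⌊z⌋₊ := by exact_mod_cast hnz
    have hz : (⌊z⌋₊ : ℝ) ≤ z :=
      Nat.floor_le (zero_le_one.trans (Nat.floor_pos.mp (Nat.zero_lt_of_lt hnz)))
    rw [sub_nonneg, le_div_iff₀ (by positivity)]
    linarith
  have hsum : z * harmonic ⌊z⌋₊ - ⌊z⌋₊ = ∑ n ∈ range ⌊z⌋₊, (z / ((n : ℝ) + 1) - 1) := by
    simp [harmonic_eq_sum_inv, mul_sum, div_eq_mul_inv]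
  rw [latticeCount_one_eq_sum, hsum, ENNReal.ofReal_sum_of_nonneg hterm]
  exact sum_le_sum fun n _ => ofReal_le_natCeil _

lemma harmonic_floor_le_two_mul_logPlus {z : ℝ} (hz : 0 ≤ z) :
    (harmonic ⌊z⌋₊ : ℝ) ≤ 2 * logPlus z := by
  have hlog : Real.log ⌊z⌋₊ ≤ logPlus z := by
    rcases (Nat.zero_le ⌊z⌋₊).eq_or_lt with h | h
    · simpa [← h] using logPlus_nonneg z
    · exact (Real.log_le_log (by exact_mod_cast h) (Nat.floor_le hz)).trans (le_max_left _ _)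
  linarith [harmonic_le_one_add_log ⌊z⌋₊, one_le_logPlus z]

lemma latticeCount_one_le_ofReal_mul_logPlus {z : ℝ} (hz : 0 ≤ z) :
    latticeCount 1 z ≤ ENNReal.ofReal (2 * (z * logPlus z)) := by
  refine (latticeCount_one_le_ofReal_mul_harmonic hz).trans (ENNReal.ofReal_le_ofReal ?_)
  nlinarith [harmonic_floor_le_two_mul_logPlus hz]

lemma ofReal_mul_logPlus_le_latticeCount_one {z : ℝ} (hz : 0 ≤ z) :
    ENNReal.ofReal (z * logPlus z) ≤ 2 * latticeCount 1 z + 1 := by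
  set a := z * harmonic ⌊z⌋₊ - ⌊z⌋₊
  suffices h : ENNReal.ofReal (z * logPlus z) ≤ ENNReal.ofReal a + ENNReal.ofReal z by
    refine h.trans ?_
    rw [two_mul, add_assoc]
    gcongr
    exacts [ofReal_mul_harmonic_sub_le_latticeCount_one z, ofReal_le_latticeCount_add_one 1 z]
  rcases le_or_gt 1 (Real.log z) with hlog | hlog
  · have hz0 : 0 < z := hz.lt_of_ne (by rintro rfl; norm_num at hlog)
    have hH : Real.log z ≤ harmonic ⌊z⌋₊ :=
      (Real.log_le_log hz0 (Nat.lt_floor_add_one z).le).trans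
        (by exact_mod_cast log_add_one_le_harmonic ⌊z⌋₊)
    have hza : z * logPlus z ≤ a + z := by
      rw [logPlus, max_eq_left hlog]
      nlinarith [Nat.floor_le hz]
    exact (ENNReal.ofReal_le_ofReal hza).trans ENNReal.ofReal_add_le
  · rw [logPlus, max_eq_right hlog.le, mul_one]
    exact le_add_self

section Integrability

variable {Ω : Type*} [MeasurableSpace Ω] {μ : Measure Ω}

lemma lintegral_lt_top_of_le_mul_add [IsFiniteMeasure μ] {f g : Ω → ℝ≥0∞} {C D : ℝ≥0∞}
    (hC : C ≠ ∞) (hD : D ≠ ∞) (hfg : ∀ ω, f ω ≤ C * g ω + D) (hg : ∫⁻ ω, g ω ∂μ < ∞) :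
    ∫⁻ ω, f ω ∂μ < ∞ :=
  calc ∫⁻ ω, f ω ∂μ ≤ ∫⁻ ω, C * g ω + D ∂μ := lintegral_mono hfg
    _ = C * ∫⁻ ω, g ω ∂μ + D * μ Set.univ := by
        rw [lintegral_add_right _ measurable_const, lintegral_const_mul' _ _ hC, lintegral_const]
    _ < ∞ := by
        have := measure_ne_top μ Set.univ
        finiteness

lemma lintegral_latticeCount_lt_top_iff [IsFiniteMeasure μ] {γ : ℝ} (hγ : 1 < γ) {f : Ω → ℝ}
    (hf : AEStronglyMeasurable f μ) (hf0 : ∀ ω, 0 ≤ f ω) :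
    ∫⁻ ω, latticeCount γ (f ω) ∂μ < ∞ ↔ Integrable f μ := by
  rw [← lintegral_ofReal_ne_top_iff_integrable hf (Eventually.of_forall hf0), ← lt_top_iff_ne_top]
  constructor
  · refine lintegral_lt_top_of_le_mul_add (C := 1) (D := 1) ENNReal.one_ne_top ENNReal.one_ne_top
      fun ω => by simpa using ofReal_le_latticeCount_add_one γ (f ω)
  · exact lintegral_lt_top_of_le_mul_add (D := 0) (tsum_ofReal_inv_add_one_rpow_ne_top hγ)
      ENNReal.zero_ne_top fun ω => by
        rw [add_zero, mul_comm]; exact latticeCount_le_ofReal_mul_tsum γ (hf0 ω)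

lemma lintegral_latticeCount_one_lt_top_iff [IsFiniteMeasure μ] {f : Ω → ℝ}
    (hf : AEMeasurable f μ) (hf0 : ∀ ω, 0 ≤ f ω) :
    ∫⁻ ω, latticeCount 1 (f ω) ∂μ < ∞ ↔ Integrable (fun ω => f ω * logPlus (f ω)) μ := by
  have hm : AEStronglyMeasurable (fun ω => f ω * logPlus (f ω)) μ := by fun_prop
  rw [← lintegral_ofReal_ne_top_iff_integrable hm
    (Eventually.of_forall fun ω => mul_nonneg (hf0 ω) (logPlus_nonneg _)),
    ← lt_top_iff_ne_top]
  constructor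
  · exact lintegral_lt_top_of_le_mul_add (C := 2) (D := 1) ENNReal.ofNat_ne_top
      ENNReal.one_ne_top fun ω => ofReal_mul_logPlus_le_latticeCount_one (hf0 ω)
  · refine lintegral_lt_top_of_le_mul_add (C := 2) (D := 0) ENNReal.ofNat_ne_top
      ENNReal.zero_ne_top fun ω => ?_
    rw [add_zero, ← ENNReal.ofReal_ofNat 2, ← ENNReal.ofReal_mul zero_le_two]
    exact latticeCount_one_le_ofReal_mul_logPlus (hf0 ω)

lemma integrable_rpow_mul_logPlus_rpow_iff {g : Ω → ℝ} {p : ℝ} (hp : 1 ≤ p)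
    (hg : AEMeasurable g μ) (hg0 : ∀ ω, 0 ≤ g ω) :
    Integrable (fun ω => g ω ^ p * logPlus (g ω ^ p)) μ ↔
      Integrable (fun ω => g ω ^ p * logPlus (g ω)) μ := by
  have hgp : ∀ ω, 0 ≤ g ω ^ p := fun ω => Real.rpow_nonneg (hg0 ω) p
  constructor
  · refine fun h => h.mono' (by fun_prop) (Eventually.of_forall fun ω => ?_)
    rw [Real.norm_of_nonneg (mul_nonneg (hgp ω) (logPlus_nonneg _))]
    exact mul_le_mul_of_nonneg_left (logPlus_le_logPlus_rpow hp (hg0 ω)) (hgp ω)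
  · refine fun h => (h.const_mul p).mono' (by fun_prop) (Eventually.of_forall fun ω => ?_)
    rw [Real.norm_of_nonneg (mul_nonneg (hgp ω) (logPlus_nonneg _)), mul_left_comm]
    exact mul_le_mul_of_nonneg_left (logPlus_rpow_le hp (hg0 ω)) (hgp ω)

end Integrability

lemma rpow_mul_rpow_lt_iff {a b x α β : ℝ} (ha : 0 ≤ a) (hb : 0 ≤ b) (hx : 0 ≤ x) (hα : 0 < α) :
    a ^ α * b ^ β < x ↔ a * b ^ (β / α) < x ^ (1 / α) := by
  have hab : (a ^ α * b ^ β) ^ (1 / α) = a * b ^ (β / α) := by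
    rw [Real.mul_rpow (by positivity) (by positivity), ← Real.rpow_mul ha, ← Real.rpow_mul hb,
      mul_one_div_cancel hα.ne', Real.rpow_one, mul_one_div]
  rw [← hab, Real.rpow_lt_rpow_iff (by positivity) hx (by positivity)]

lemma tsum_tsum_measure_eq_lintegral {Ω ι κ : Type*} [MeasurableSpace Ω] [Countable ι]
    [Countable κ] (μ : Measure Ω) {s : ι → κ → Set Ω} (hs : ∀ i k, MeasurableSet (s i k)) :
    ∑' i, ∑' k, μ (s i k) = ∫⁻ ω, ∑' i, ∑' k, (s i k).indicator 1 ω ∂μ := by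
  rw [lintegral_tsum fun i => (Measurable.tsum fun k =>
    measurable_one.indicator (hs i k)).aemeasurable]
  refine tsum_congr fun i => ?_
  rw [lintegral_tsum fun k => (measurable_one.indicator (hs i k)).aemeasurable]
  exact tsum_congr fun k => (lintegral_indicator_one (hs i k)).symm

lemma tsum_measure_lt_abs_eq_lintegral_latticeCount {Ω : Type*} [MeasurableSpace Ω]
    (μ : Measure Ω) {α : ℝ} (hα : 0 < α) (β : ℝ) {X : Ω → ℝ} (hX : Measurable X) :
    ∑' m : ℕ, ∑' n : ℕ, μ {ω | ((m : ℝ) + 1) ^ α * ((n : ℝ) + 1) ^ β < |X ω|} =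
      ∫⁻ ω, latticeCount (β / α) (|X ω| ^ (1 / α)) ∂μ := by
  rw [tsum_tsum_measure_eq_lintegral μ fun m n => measurableSet_lt measurable_const hX.abs]
  refine lintegral_congr fun ω => tsum_congr fun m => tsum_congr fun n => ?_
  exact if_congr (rpow_mul_rpow_lt_iff (by positivity) (by positivity) (abs_nonneg _) hα) rfl rfl

theorem tail_series_iff_moment
    {Ω : Type*} [MeasureSpace Ω] [IsProbabilityMeasure (ℙ : Measure Ω)]
    (α β : ℝ) (hα0 : 0 < α) (hαβ : α ≤ β) (hβ1 : β ≤ 1)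
    (X : Ω → ℝ) (hmeas : Measurable X) :
    (∑' m : ℕ, ∑' n : ℕ,
        ℙ {ω | ((m : ℝ) + 1) ^ α * ((n : ℝ) + 1) ^ β < |X ω|} < ⊤)
    ↔ ((α < β → Integrable (fun ω => |X ω| ^ (1 / α)) ℙ)
        ∧ (α = β → Integrable (fun ω => |X ω| ^ (1 / α) * logPlus |X ω|) ℙ)) := by
  have hZ : Measurable fun ω => |X ω| ^ (1 / α) := hmeas.abs.pow_const _
  have hZ0 : ∀ ω, 0 ≤ |X ω| ^ (1 / α) := fun ω => by positivity
  rw [tsum_measure_lt_abs_eq_lintegral_latticeCount ℙ hα0 β hmeas]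
  rcases hαβ.lt_or_eq with hlt | rfl
  · rw [lintegral_latticeCount_lt_top_iff ((one_lt_div hα0).mpr hlt) hZ.aestronglyMeasurable hZ0]
    simp [hlt, hlt.ne]
  · rw [div_self hα0.ne', lintegral_latticeCount_one_lt_top_iff hZ.aemeasurable hZ0,
      integrable_rpow_mul_logPlus_rpow_iff ((one_le_div hα0).mpr hβ1) hmeas.abs.aemeasurable
        fun ω => abs_nonneg _]
    simp
end
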